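/- arXiv:2207.13496 — 15 statements merged into one kernel-verified Lean document; each statement's English description precedes it below -/
import Mathlib

section
/- Let φ be a self-map of T. The composition operator C_φ, defined by C_φ f = f ∘ φ, is a bounded operator from Lμ(T) to Lμ(T) if and only if sup_{v∈T} μ(v)/μ(φ(v)) < ∞; moreover, in that case the operator norm of C_φ equals sup_{v∈T} μ(v)/μ(φ(v)). -/
open Filter Set Topology

/-- The weighted sup-norm `‖f‖_μ = sup_{v ∈ T} μ(v) |f(v)|`. -/
noncomputable def wnorm {T : Type*} (μ : T → ℝ) (f : T → ℂ) : ℝ :=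
  ⨆ v : T, μ v * ‖f v‖

/-- Membership in the weighted Banach space `Lμ(T)`: `sup_{v} μ(v)|f(v)| < ∞`. -/
def memL {T : Type*} (μ : T → ℝ) (f : T → ℂ) : Prop :=
  BddAbove (Set.range fun v : T => μ v * ‖f v‖)

/-!
The pointwise identity `μ v |f (φ v)| = (μ v / μ (φ v)) · μ (φ v) |f (φ v)|` bounds `‖f ∘ φ‖_μ` by
`(sup_v μ v / μ (φ v)) ‖f‖_μ`. Conversely, testing the operator on the unit-norm function
`1 / μ w` supported at `w = φ v` shows that every bound `C` for it dominates `μ v / μ (φ v)`.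
-/

namespace WeightedComposition

variable {T : Type*} {μ : T → ℝ}

noncomputable def peak (μ : T → ℝ) (w : T) : T → ℂ :=
  ({w} : Set T).indicator fun _ => ((μ w)⁻¹ : ℂ)

lemma peak_self (w : T) : peak μ w w = ((μ w)⁻¹ : ℂ) :=
  Set.indicator_of_mem (Set.mem_singleton w) _

lemma peak_of_ne {v w : T} (h : v ≠ w) : peak μ w v = 0 :=
  Set.indicator_of_notMem (Set.notMem_singleton_iff.2 h) _

lemma weight_mul_norm_peak_self (hμ : ∀ v, 0 < μ v) (w : T) : μ w * ‖peak μ w w‖ = 1 := by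
  rw [peak_self, ← Complex.ofReal_inv, Complex.norm_real,
    Real.norm_of_nonneg (inv_pos.2 (hμ w)).le, mul_inv_cancel₀ (hμ w).ne']

lemma weight_mul_norm_peak_le_one (hμ : ∀ v, 0 < μ v) (w v : T) : μ v * ‖peak μ w v‖ ≤ 1 := by
  by_cases h : v = w
  · subst h
    rw [weight_mul_norm_peak_self hμ]
  · simp [peak_of_ne h]

lemma le_wnorm {f : T → ℂ} (hf : memL μ f) (v : T) : μ v * ‖f v‖ ≤ wnorm μ f :=
  le_ciSup hf v

lemma wnorm_nonneg (hμ : ∀ v, 0 < μ v) (f : T → ℂ) : 0 ≤ wnorm μ f :=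
  Real.iSup_nonneg fun v => mul_nonneg (hμ v).le (norm_nonneg _)

lemma memL_peak (hμ : ∀ v, 0 < μ v) (w : T) : memL μ (peak μ w) :=
  ⟨1, forall_mem_range.2 (weight_mul_norm_peak_le_one hμ w)⟩

lemma wnorm_peak (hμ : ∀ v, 0 < μ v) (w : T) : wnorm μ (peak μ w) = 1 :=
  le_antisymm (Real.iSup_le (weight_mul_norm_peak_le_one hμ w) zero_le_one)
    ((weight_mul_norm_peak_self hμ w).symm.trans_le (le_wnorm (memL_peak hμ w) w))

variable {φ : T → T}

lemma div_le_of_wnorm_comp_le (hμ : ∀ v, 0 < μ v) {C : ℝ}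
    (hcomp : ∀ f : T → ℂ, memL μ f → memL μ (f ∘ φ))
    (hC : ∀ f : T → ℂ, memL μ f → wnorm μ (f ∘ φ) ≤ C * wnorm μ f) (v : T) :
    μ v / μ (φ v) ≤ C := by
  have hpeak := memL_peak hμ (φ v)
  calc μ v / μ (φ v) = μ v * ‖(peak μ (φ v) ∘ φ) v‖ := by
        rw [Function.comp_apply, peak_self, ← Complex.ofReal_inv, Complex.norm_real,
          Real.norm_of_nonneg (inv_pos.2 (hμ (φ v))).le, div_eq_mul_inv]
    _ ≤ wnorm μ (peak μ (φ v) ∘ φ) := le_wnorm (hcomp _ hpeak) v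
    _ ≤ C * wnorm μ (peak μ (φ v)) := hC _ hpeak
    _ = C := by rw [wnorm_peak hμ, mul_one]

section BoundedRatio

variable (hμ : ∀ v, 0 < μ v) (hB : BddAbove (Set.range fun v : T => μ v / μ (φ v)))
include hμ hB

lemma weight_mul_norm_comp_le {f : T → ℂ} (hf : memL μ f) (v : T) :
    μ v * ‖(f ∘ φ) v‖ ≤ (⨆ v : T, μ v / μ (φ v)) * wnorm μ f := by
  have hφv := (hμ (φ v)).ne'
  calc μ v * ‖(f ∘ φ) v‖ = μ v / μ (φ v) * (μ (φ v) * ‖f (φ v)‖) := by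
        field_simp
        rfl
    _ ≤ (⨆ v : T, μ v / μ (φ v)) * wnorm μ f :=
        mul_le_mul (le_ciSup hB v) (le_wnorm hf (φ v))
          (mul_nonneg (hμ _).le (norm_nonneg _))
          (Real.iSup_nonneg fun u => (div_pos (hμ u) (hμ (φ u))).le)

lemma memL_comp {f : T → ℂ} (hf : memL μ f) : memL μ (f ∘ φ) :=
  ⟨_, forall_mem_range.2 (weight_mul_norm_comp_le hμ hB hf)⟩

lemma wnorm_comp_le {f : T → ℂ} (hf : memL μ f) :
    wnorm μ (f ∘ φ) ≤ (⨆ v : T, μ v / μ (φ v)) * wnorm μ f :=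
  Real.iSup_le (weight_mul_norm_comp_le hμ hB hf)
    (mul_nonneg (Real.iSup_nonneg fun u => (div_pos (hμ u) (hμ (φ u))).le) (wnorm_nonneg hμ f))

end BoundedRatio

end WeightedComposition

open WeightedComposition in
theorem stmt_5_general {T : Type*}
    (μ : T → ℝ) (hμ : ∀ v : T, 0 < μ v) (φ : T → T) :
    (((∀ f : T → ℂ, memL μ f → memL μ (f ∘ φ)) ∧
        ∃ C : ℝ, ∀ f : T → ℂ, memL μ f → wnorm μ (f ∘ φ) ≤ C * wnorm μ f) ↔
      BddAbove (Set.range fun v : T => μ v / μ (φ v))) ∧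
    (BddAbove (Set.range fun v : T => μ v / μ (φ v)) →
      sInf {C : ℝ | 0 ≤ C ∧ ∀ f : T → ℂ, memL μ f → wnorm μ (f ∘ φ) ≤ C * wnorm μ f}
        = ⨆ v : T, μ v / μ (φ v)) := by
  refine ⟨⟨fun ⟨hcomp, C, hC⟩ => ⟨C, forall_mem_range.2 (div_le_of_wnorm_comp_le hμ hcomp hC)⟩,
    fun hB => ⟨fun f => memL_comp hμ hB, _, fun f => wnorm_comp_le hμ hB⟩⟩, fun hB => ?_⟩
  have hsup_mem : (⨆ v : T, μ v / μ (φ v)) ∈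
      {C : ℝ | 0 ≤ C ∧ ∀ f : T → ℂ, memL μ f → wnorm μ (f ∘ φ) ≤ C * wnorm μ f} :=
    ⟨Real.iSup_nonneg fun v => (div_pos (hμ v) (hμ (φ v))).le, fun f => wnorm_comp_le hμ hB⟩
  refine le_antisymm (csInf_le ⟨0, fun C hC => hC.1⟩ hsup_mem) (le_csInf ⟨_, hsup_mem⟩ ?_)
  rintro C ⟨hC_nonneg, hC⟩
  exact Real.iSup_le (div_le_of_wnorm_comp_le hμ (fun f => memL_comp hμ hB) hC) hC_nonneg

/-- The composition operator `C_φ f = f ∘ φ` is a bounded operator on `Lμ(T)`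
if and only if `sup_{v∈T} μ(v)/μ(φ(v)) < ∞`; moreover, in that case its operator norm
equals `sup_{v∈T} μ(v)/μ(φ(v))`. -/
theorem stmt_5 {T : Type*} [MetricSpace T] (o : T)
    (hloc : ∀ M : ℝ, {v : T | dist o v ≤ M}.Finite)
    (hunb : ∀ M : ℝ, ∃ v : T, M < dist o v)
    (μ : T → ℝ) (hμ : ∀ v : T, 0 < μ v) (φ : T → T) :
    (((∀ f : T → ℂ, memL μ f → memL μ (f ∘ φ)) ∧
        ∃ C : ℝ, ∀ f : T → ℂ, memL μ f → wnorm μ (f ∘ φ) ≤ C * wnorm μ f) ↔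
      BddAbove (Set.range fun v : T => μ v / μ (φ v))) ∧
    (BddAbove (Set.range fun v : T => μ v / μ (φ v)) →
      sInf {C : ℝ | 0 ≤ C ∧ ∀ f : T → ℂ, memL μ f → wnorm μ (f ∘ φ) ≤ C * wnorm μ f}
        = ⨆ v : T, μ v / μ (φ v)) :=
  stmt_5_general μ hμ φ
end

section
/- Let φ be a self-map of T with finite range (i.e., φ(T) is a finite set). Then φ is admissible if and only if μ is bounded on T. -/
open Filter Set Topology

/-- `φ` is admissible: `C_φ` is bounded on `Lμ(T)`, equivalently there is `C > 0`
with `μ(v) ≤ C μ(φ(v))` for all `v ∈ T`. -/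
def Admissible {T : Type*} (μ : T → ℝ) (φ : T → T) : Prop :=
  ∃ C : ℝ, 0 < C ∧ ∀ v : T, μ v ≤ C * μ (φ v)

/-- If the self-map `φ` of `T` has finite range, then `φ` is admissible
if and only if `μ` is bounded on `T`. -/
theorem stmt_6 {T : Type*} [MetricSpace T] (o : T)
    (hloc : ∀ M : ℝ, {v : T | dist o v ≤ M}.Finite)
    (hunb : ∀ M : ℝ, ∃ v : T, M < dist o v)
    (μ : T → ℝ) (hμ : ∀ v : T, 0 < μ v) (φ : T → T)
    (hfin : (Set.range φ).Finite) :
    Admissible μ φ ↔ ∃ M : ℝ, ∀ v : T, μ v ≤ M := by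
  have hT : Nonempty T := ⟨o⟩
  have hsne : (hfin.toFinset.image μ).Nonempty := by
    simp [Set.Finite.toFinset_nonempty, Set.range_nonempty]
  constructor
  · rintro ⟨C, hC, h⟩
    refine ⟨C * (hfin.toFinset.image μ).max' hsne, fun v => ?_⟩
    refine (h v).trans (mul_le_mul_of_nonneg_left ?_ hC.le)
    exact Finset.le_max' _ _ (Finset.mem_image.2 ⟨φ v, by simp, rfl⟩)
  · rintro ⟨M, hM⟩
    set m := (hfin.toFinset.image μ).min' hsne with hm
    have hmpos : 0 < m := by
      obtain ⟨x, hx, hxm⟩ := Finset.mem_image.1 ((hfin.toFinset.image μ).min'_mem hsne)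
      rw [hm, ← hxm]; exact hμ x
    have hMpos : 0 < M := lt_of_lt_of_le (hμ o) (hM o)
    refine ⟨M / m, div_pos hMpos hmpos, fun v => ?_⟩
    have hmle : m ≤ μ (φ v) :=
      Finset.min'_le _ _ (Finset.mem_image.2 ⟨φ v, by simp, rfl⟩)
    calc μ v ≤ M := hM v
      _ = M / m * m := by field_simp
      _ ≤ M / m * μ (φ v) := by
          exact mul_le_mul_of_nonneg_left hmle (div_pos hMpos hmpos).le
end

section
/- Let φ be a self-map of T with finite range (i.e., φ(T) is a finite set). Then C_φ maps L⁰μ(T) boundedly into L⁰μ(T) if and only if μ(v) → 0 as |v| → ∞. -/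
open Filter Set Topology

/-- Membership in the little weighted Banach space `L⁰μ(T)`:
`f ∈ Lμ(T)` and `μ(v)|f(v)| → 0` as `|v| = d(o,v) → ∞`. -/
def memL0 {T : Type*} [MetricSpace T] (o : T) (μ : T → ℝ) (f : T → ℂ) : Prop :=
  memL μ f ∧ ∀ ε : ℝ, 0 < ε → ∃ N : ℝ, ∀ v : T, N ≤ dist o v → μ v * ‖f v‖ < ε

/-- `C_φ` maps `L⁰μ(T)` boundedly into `L⁰μ(T)`. -/
def CompBoundedL0 {T : Type*} [MetricSpace T] (o : T) (μ : T → ℝ) (φ : T → T) : Prop :=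
  (∀ f : T → ℂ, memL0 o μ f → memL0 o μ (f ∘ φ)) ∧
    ∃ C : ℝ, ∀ f : T → ℂ, memL0 o μ f → wnorm μ (f ∘ φ) ≤ C * wnorm μ f

/-- If the self-map `φ` of `T` has finite range, then `C_φ` maps `L⁰μ(T)`
boundedly into `L⁰μ(T)` if and only if `μ(v) → 0` as `|v| → ∞`. -/
theorem stmt_7 {T : Type*} [MetricSpace T] (o : T)
    (hloc : ∀ M : ℝ, {v : T | dist o v ≤ M}.Finite)
    (hunb : ∀ M : ℝ, ∃ v : T, M < dist o v)
    (μ : T → ℝ) (hμ : ∀ v : T, 0 < μ v) (φ : T → T)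
    (hfin : (Set.range φ).Finite) :
    CompBoundedL0 o μ φ ↔
      ∀ ε : ℝ, 0 < ε → ∃ N : ℝ, ∀ v : T, N ≤ dist o v → μ v < ε := by
  classical
  have hne : Nonempty T := ⟨o⟩
  constructor
  · rintro ⟨hmap, -⟩ ε hε
    have key : ∀ u : T, ∃ N : ℝ, ∀ v : T, N ≤ dist o v →
        μ v * ‖(fun w => if w = u then (1:ℂ) else 0) (φ v)‖ < ε := by
      intro u
      have hf : memL0 o μ (fun w => if w = u then (1:ℂ) else 0) := by
        constructor
        · refine ⟨μ u, ?_⟩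
          rintro x ⟨v, rfl⟩
          by_cases h : v = u
          · simp [h]
          · simp [h]
            exact (hμ u).le
        · intro ε' hε'
          refine ⟨dist o u + 1, fun v hv => ?_⟩
          have hvu : v ≠ u := by
            intro h; subst h; linarith
          simp [hvu, hε']
      exact (hmap _ hf).2 ε hε
    choose g hg using key
    have hSne : hfin.toFinset.Nonempty := ⟨φ o, by simp⟩
    refine ⟨hfin.toFinset.sup' hSne g, fun v hv => ?_⟩
    have hmem : φ v ∈ hfin.toFinset := by simp
    have hle : g (φ v) ≤ dist o v := le_trans (Finset.le_sup' g hmem) hv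
    have := hg (φ v) v hle
    simpa using this
  · intro hμ0
    -- a uniform upper bound A on μ
    obtain ⟨N1, hN1⟩ := hμ0 1 one_pos
    have hFne : (hloc (max N1 0)).toFinset.Nonempty :=
      ⟨o, by simp [dist_self]⟩
    set A := max 1 ((hloc (max N1 0)).toFinset.sup' hFne μ) with hA
    have hA1 : (1:ℝ) ≤ A := le_max_left _ _
    have hA0 : (0:ℝ) ≤ A := by linarith
    have hAub : ∀ v, μ v ≤ A := by
      intro v
      by_cases h : dist o v ≤ max N1 0
      · exact le_trans (Finset.le_sup' μ ((hloc _).mem_toFinset.mpr h)) (le_max_right _ _)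
      · push_neg at h
        have hNv : N1 ≤ dist o v := le_trans (le_max_left _ _) h.le
        exact le_trans (hN1 v hNv).le hA1
    -- a positive lower bound m on μ over the range of φ
    have hSne : hfin.toFinset.Nonempty := ⟨φ o, by simp⟩
    set m := hfin.toFinset.inf' hSne μ with hm
    have hmpos : 0 < m := by
      obtain ⟨u, hu, hum⟩ := Finset.exists_mem_eq_inf' hSne μ
      rw [hm, hum]; exact hμ u
    have hmle : ∀ v, m ≤ μ (φ v) := fun v => Finset.inf'_le μ (by simp)
    have keybound : ∀ (f : T → ℂ) (v : T),
        μ v * ‖f (φ v)‖ ≤ A / m * (μ (φ v) * ‖f (φ v)‖) := by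
      intro f v
      rw [div_mul_eq_mul_div, le_div_iff₀ hmpos]
      have h1 : μ v * m ≤ A * μ (φ v) :=
        mul_le_mul (hAub v) (hmle v) hmpos.le hA0
      nlinarith [norm_nonneg (f (φ v))]
    constructor
    · intro f hf
      obtain ⟨Cf, hCf⟩ := hf.1
      have hCf' : ∀ v, μ v * ‖f v‖ ≤ Cf := fun v => hCf ⟨v, rfl⟩
      have hCf0 : 0 ≤ Cf :=
        le_trans (mul_nonneg (hμ o).le (norm_nonneg _)) (hCf' o)
      constructor
      · refine ⟨A / m * Cf, ?_⟩
        rintro x ⟨v, rfl⟩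
        refine le_trans (keybound f v) ?_
        exact mul_le_mul_of_nonneg_left (hCf' (φ v)) (div_nonneg hA0 hmpos.le)
      · intro ε hε
        have hpos : 0 < ε * m / (Cf + 1) := by positivity
        obtain ⟨N, hN⟩ := hμ0 _ hpos
        refine ⟨N, fun v hv => ?_⟩
        have hμv := hN v hv
        have hμv' : μ v * (Cf + 1) < ε * m := by
          rw [lt_div_iff₀ (by linarith)] at hμv
          linarith
        have hnorm : m * ‖f (φ v)‖ ≤ Cf := by
          calc m * ‖f (φ v)‖ ≤ μ (φ v) * ‖f (φ v)‖ :=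
                mul_le_mul_of_nonneg_right (hmle v) (norm_nonneg _)
            _ ≤ Cf := hCf' (φ v)
        have h2 : m * (μ v * ‖f (φ v)‖) < ε * m := by
          have : μ v * (m * ‖f (φ v)‖) ≤ μ v * Cf :=
            mul_le_mul_of_nonneg_left hnorm (hμ v).le
          nlinarith [(hμ v).le]
        have := (mul_lt_mul_iff_right₀ hmpos).mp (by linarith [h2] :
          m * (μ v * ‖f (φ v)‖) < m * ε)
        simpa using this
    · refine ⟨A / m, fun f hf => ?_⟩
      have hwf : ∀ v, μ (φ v) * ‖f (φ v)‖ ≤ wnorm μ f := fun v =>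
        le_ciSup hf.1 (φ v)
      refine ciSup_le fun v => ?_
      refine le_trans (keybound f v) ?_
      exact mul_le_mul_of_nonneg_left (hwf v) (div_nonneg hA0 hmpos.le)
end

section
/- Let φ be a self-map of T. If the composition operator C_φ maps L⁰μ(T) boundedly into L⁰μ(T), then φ is admissible, i.e., sup_{v∈T} μ(v)/μ(φ(v)) < ∞. -/
open Filter Set Topology

/-- If `C_φ` maps `L⁰μ(T)` boundedly into `L⁰μ(T)`, then `φ` is admissible,
i.e. `sup_{v∈T} μ(v)/μ(φ(v)) < ∞`. -/
theorem stmt_8 {T : Type*} [MetricSpace T] (o : T)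
    (hloc : ∀ M : ℝ, {v : T | dist o v ≤ M}.Finite)
    (hunb : ∀ M : ℝ, ∃ v : T, M < dist o v)
    (μ : T → ℝ) (hμ : ∀ v : T, 0 < μ v) (φ : T → T)
    (hb : CompBoundedL0 o μ φ) :
    BddAbove (Set.range fun v : T => μ v / μ (φ v)) := by
  classical
  haveI : Nonempty T := ⟨o⟩
  obtain ⟨hmap, C, hC⟩ := hb
  -- point mass functions
  have key : ∀ v : T, μ v / μ (φ v) ≤ C := by
    intro v
    set w := φ v with hw
    set f : T → ℂ := fun u => if u = w then 1 else 0 with hf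
    have hterm : ∀ u : T, μ u * ‖f u‖ ≤ μ w := by
      intro u
      by_cases h : u = w
      · simp [hf, h]
      · simp [hf, h, (hμ w).le]
    have hmem : memL0 o μ f := by
      constructor
      · exact ⟨μ w, by rintro x ⟨u, rfl⟩; exact hterm u⟩
      · intro ε hε
        refine ⟨dist o w + 1, fun u hu => ?_⟩
        have hne : u ≠ w := by
          intro h; subst h; linarith
        simpa [hf, hne] using hε
    have hbdd : BddAbove (Set.range fun u : T => μ u * ‖f u‖) :=
      ⟨μ w, by rintro x ⟨u, rfl⟩; exact hterm u⟩
    have hsup : wnorm μ f = μ w := by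
      refine le_antisymm (ciSup_le hterm) ?_
      have := le_ciSup hbdd w
      simpa [wnorm, hf] using this
    have hcomp := (hmap f hmem).1
    have h1 : μ v * ‖(f ∘ φ) v‖ ≤ wnorm μ (f ∘ φ) := le_ciSup hcomp v
    have h2 : μ v * ‖(f ∘ φ) v‖ = μ v := by simp [hf, hw]
    have h3 : μ v ≤ C * μ w := by
      calc μ v = μ v * ‖(f ∘ φ) v‖ := h2.symm
        _ ≤ wnorm μ (f ∘ φ) := h1
        _ ≤ C * wnorm μ f := hC f hmem
        _ = C * μ w := by rw [hsup]
    rw [div_le_iff₀ (hμ w)]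
    linarith
  exact ⟨C, by rintro x ⟨v, rfl⟩; exact key v⟩
end

section
/- Let φ be an admissible self-map of T. If μ(v) → 0 as |v| → ∞, then C_φ maps L⁰μ(T) into L⁰μ(T) and is a bounded operator on L⁰μ(T). -/
open Filter Set Topology

/-- If `φ` is admissible and `μ(v) → 0` as `|v| → ∞`, then `C_φ` maps
`L⁰μ(T)` into `L⁰μ(T)` and is a bounded operator on `L⁰μ(T)`. -/
theorem stmt_9 {T : Type*} [MetricSpace T] (o : T)
    (hloc : ∀ M : ℝ, {v : T | dist o v ≤ M}.Finite)
    (hunb : ∀ M : ℝ, ∃ v : T, M < dist o v)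
    (μ : T → ℝ) (hμ : ∀ v : T, 0 < μ v) (φ : T → T)
    (hadm : Admissible μ φ)
    (hμ0 : ∀ ε : ℝ, 0 < ε → ∃ N : ℝ, ∀ v : T, N ≤ dist o v → μ v < ε) :
    CompBoundedL0 o μ φ := by
  obtain ⟨C, hC, hCle⟩ := hadm
  have hT : Nonempty T := ⟨(hunb 0).choose⟩
  have key : ∀ f : T → ℂ, memL μ f → ∀ v, μ v * ‖(f ∘ φ) v‖ ≤ C * wnorm μ f := by
    intro f hfb v
    have h1 : μ (φ v) * ‖f (φ v)‖ ≤ wnorm μ f := le_ciSup hfb (φ v)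
    have h2 := mul_le_mul_of_nonneg_right (hCle v) (norm_nonneg (f (φ v)))
    have h3 := mul_le_mul_of_nonneg_left h1 hC.le
    simp only [Function.comp_apply]
    nlinarith
  constructor
  · rintro f ⟨hfb, hfv⟩
    refine ⟨⟨C * wnorm μ f, ?_⟩, ?_⟩
    · rintro x ⟨v, rfl⟩; exact key f hfb v
    · intro ε hε
      obtain ⟨N1, hN1⟩ := hfv (ε / C) (div_pos hε hC)
      set S := {w : T | dist o w ≤ N1} with hSdef
      have hS : S.Finite := hloc N1
      set B := max (sSup ((fun w => ‖f w‖) '' S)) 0 with hBdef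
      have hB0 : 0 ≤ B := le_max_right _ _
      have hB : ∀ w ∈ S, ‖f w‖ ≤ B := by
        intro w hw
        exact le_trans (le_csSup (hS.image _).bddAbove ⟨w, hw, rfl⟩) (le_max_left _ _)
      obtain ⟨N2, hN2⟩ := hμ0 (ε / (B + 1)) (div_pos hε (by linarith))
      refine ⟨N2, fun v hv => ?_⟩
      by_cases h : dist o (φ v) ≤ N1
      · have hb := hB (φ v) h
        have hm := hN2 v hv
        have hμv := (hμ v).le
        have hn := norm_nonneg (f (φ v))
        have : μ v * (B + 1) < ε / (B + 1) * (B + 1) := by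
          apply mul_lt_mul_of_pos_right hm; linarith
        rw [div_mul_cancel₀] at this
        · simp only [Function.comp_apply]; nlinarith
        · linarith
      · push_neg at h
        have h1 := hN1 (φ v) h.le
        have h2 := mul_le_mul_of_nonneg_right (hCle v) (norm_nonneg (f (φ v)))
        have : C * (ε / C) = ε := mul_div_cancel₀ ε (ne_of_gt hC)
        simp only [Function.comp_apply]
        nlinarith
  · refine ⟨C, fun f hf => ?_⟩
    exact ciSup_le (key f hf.1)
end

section
/- Let φ be an admissible self-map of T. If the preimage φ⁻¹({v}) is a finite set for every v ∈ T, then C_φ maps L⁰μ(T) into L⁰μ(T) and is a bounded operator on L⁰μ(T). -/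
open Filter Set Topology

/-- If `φ` is admissible and `φ⁻¹({v})` is finite for every `v ∈ T`, then
`C_φ` maps `L⁰μ(T)` into `L⁰μ(T)` and is a bounded operator on `L⁰μ(T)`. -/
theorem stmt_10 {T : Type*} [MetricSpace T] (o : T)
    (hloc : ∀ M : ℝ, {v : T | dist o v ≤ M}.Finite)
    (hunb : ∀ M : ℝ, ∃ v : T, M < dist o v)
    (μ : T → ℝ) (hμ : ∀ v : T, 0 < μ v) (φ : T → T)
    (hadm : Admissible μ φ)
    (hpre : ∀ v : T, (φ ⁻¹' {v}).Finite) :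
    CompBoundedL0 o μ φ := by
  obtain ⟨C, hC, hCμ⟩ := hadm
  have key : ∀ (f : T → ℂ) (v : T), μ v * ‖f (φ v)‖ ≤ C * (μ (φ v) * ‖f (φ v)‖) := by
    intro f v
    rw [← mul_assoc]
    exact mul_le_mul_of_nonneg_right (hCμ v) (norm_nonneg _)
  constructor
  · rintro f ⟨⟨M, hM⟩, hsmall⟩
    constructor
    · refine ⟨C * M, ?_⟩
      rintro x ⟨v, rfl⟩
      calc μ v * ‖(f ∘ φ) v‖ ≤ C * (μ (φ v) * ‖f (φ v)‖) := key f v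
        _ ≤ C * M := mul_le_mul_of_nonneg_left (hM ⟨φ v, rfl⟩) hC.le
    · intro ε hε
      obtain ⟨N, hN⟩ := hsmall (ε / C) (div_pos hε hC)
      have hfin : (φ ⁻¹' {w : T | dist o w ≤ N}).Finite := by
        have heq : φ ⁻¹' {w : T | dist o w ≤ N} =
            ⋃ w ∈ {w : T | dist o w ≤ N}, φ ⁻¹' {w} := by
          ext v; simp
        rw [heq]
        exact (hloc N).biUnion (fun w _ => hpre w)
      obtain ⟨N', hN'⟩ : ∃ N', ∀ v ∈ φ ⁻¹' {w : T | dist o w ≤ N}, dist o v ≤ N' := by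
        obtain ⟨N', hN'⟩ := (hfin.image (dist o)).bddAbove
        exact ⟨N', fun v hv => hN' ⟨v, hv, rfl⟩⟩
      refine ⟨N' + 1, fun v hv => ?_⟩
      have hφv : N ≤ dist o (φ v) := by
        by_contra h
        push_neg at h
        have hv' : v ∈ φ ⁻¹' {w : T | dist o w ≤ N} := h.le
        have := hN' v hv'
        linarith
      calc μ v * ‖(f ∘ φ) v‖ ≤ C * (μ (φ v) * ‖f (φ v)‖) := key f v
        _ < C * (ε / C) := by
            exact mul_lt_mul_of_pos_left (hN _ hφv) hC
        _ = ε := mul_div_cancel₀ ε hC.ne'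
  · refine ⟨C, fun f hf => ?_⟩
    obtain ⟨hb, -⟩ := hf
    unfold wnorm
    have : Nonempty T := ⟨o⟩
    apply ciSup_le
    intro v
    calc μ v * ‖(f ∘ φ) v‖ ≤ C * (μ (φ v) * ‖f (φ v)‖) := key f v
      _ ≤ C * ⨆ w, μ w * ‖f w‖ :=
        mul_le_mul_of_nonneg_left (le_ciSup hb (φ v)) hC.le
end

section
/- Let φ be an admissible self-map of T, and let S := {w ∈ T : φ⁻¹({w}) is infinite}. If S is nonempty and finite, and μ(v) → 0 as |v| → ∞ along v ∈ φ⁻¹(S) (i.e., for every ε > 0 there is N such that μ(v) < ε for all v ∈ φ⁻¹(S) with |v| ≥ N), then C_φ maps L⁰μ(T) into L⁰μ(T) and is a bounded operator on L⁰μ(T). -/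
open Filter Set Topology

/-!
Admissibility `μ v ≤ C μ(φ v)` bounds `μ(v)|f(φ v)|` by `C μ(φ v)|f(φ v)|`, which gives boundedness
on `Lμ(T)` with constant `C`. For the decay of `f ∘ φ`, split `T` according to whether `φ v ∈ S`.
If `φ v ∉ S`, the fibre of `φ v` is finite, so by local finiteness only finitely many such `v`
have `φ v` in a given ball; far from `o` the point `φ v` is therefore far from `o` as well, and
the decay of `f` applies. If `φ v ∈ S`, then `|f(φ v)|` is bounded because `S` is finite, and the
decay of `μ` along `φ⁻¹(S)` takes over.
-/

section

variable {T : Type*} {μ : T → ℝ} {φ : T → T} {C : ℝ}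

lemma mul_norm_comp_le (hφ : ∀ v, μ v ≤ C * μ (φ v)) (f : T → ℂ) (v : T) :
    μ v * ‖f (φ v)‖ ≤ C * (μ (φ v) * ‖f (φ v)‖) := by
  rw [← mul_assoc]
  exact mul_le_mul_of_nonneg_right (hφ v) (norm_nonneg _)

lemma memL_comp (hC : 0 ≤ C) (hφ : ∀ v, μ v ≤ C * μ (φ v)) {f : T → ℂ} (hf : memL μ f) :
    memL μ (f ∘ φ) := by
  obtain ⟨B, hB⟩ := hf
  refine ⟨C * B, ?_⟩
  rintro _ ⟨v, rfl⟩
  exact (mul_norm_comp_le hφ f v).trans (mul_le_mul_of_nonneg_left (hB ⟨φ v, rfl⟩) hC)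

lemma wnorm_comp_le [Nonempty T] (hC : 0 ≤ C) (hφ : ∀ v, μ v ≤ C * μ (φ v)) {f : T → ℂ}
    (hf : memL μ f) : wnorm μ (f ∘ φ) ≤ C * wnorm μ f :=
  ciSup_le fun v =>
    (mul_norm_comp_le hφ f v).trans (mul_le_mul_of_nonneg_left (le_ciSup hf (φ v)) hC)

end

section

variable {T : Type*} [MetricSpace T] {o : T} {μ : T → ℝ} {φ : T → T} {C : ℝ}

lemma Set.Finite.exists_forall_le_dist_notMem {s : Set T} (hs : s.Finite) (o : T) :
    ∃ N : ℝ, ∀ v, N ≤ dist o v → v ∉ s := by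
  obtain ⟨N, hN⟩ := (hs.image (dist o)).bddAbove
  refine ⟨N + 1, fun v hv hvs => ?_⟩
  linarith [hN ⟨v, hvs, rfl⟩]

lemma exists_forall_le_dist_comp (hloc : ∀ M : ℝ, {v : T | dist o v ≤ M}.Finite) {S : Set T}
    (hS : ∀ w ∉ S, (φ ⁻¹' {w}).Finite) (M : ℝ) :
    ∃ N : ℝ, ∀ v, φ v ∉ S → N ≤ dist o v → M ≤ dist o (φ v) := by
  have hnear : (φ ⁻¹' ({w | dist o w ≤ M} \ S)).Finite :=
    (hloc M).sdiff.preimage' fun w hw => hS w hw.2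
  obtain ⟨N, hN⟩ := hnear.exists_forall_le_dist_notMem o
  refine ⟨N, fun v hvS hv => ?_⟩
  by_contra! hlt
  exact hN v hv ⟨hlt.le, hvS⟩

lemma exists_forall_mul_norm_comp_lt_of_notMem (hC : 0 < C) (hφ : ∀ v, μ v ≤ C * μ (φ v))
    (hloc : ∀ M : ℝ, {v : T | dist o v ≤ M}.Finite) {S : Set T}
    (hS : ∀ w ∉ S, (φ ⁻¹' {w}).Finite) {f : T → ℂ} (hf : memL0 o μ f) {ε : ℝ} (hε : 0 < ε) :
    ∃ N : ℝ, ∀ v, φ v ∉ S → N ≤ dist o v → μ v * ‖f (φ v)‖ < ε := by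
  obtain ⟨M, hM⟩ := hf.2 (ε / C) (div_pos hε hC)
  obtain ⟨N, hN⟩ := exists_forall_le_dist_comp hloc hS M
  refine ⟨N, fun v hvS hv => ?_⟩
  calc μ v * ‖f (φ v)‖ ≤ C * (μ (φ v) * ‖f (φ v)‖) := mul_norm_comp_le hφ f v
    _ < C * (ε / C) := mul_lt_mul_of_pos_left (hM (φ v) (hN v hvS hv)) hC
    _ = ε := mul_div_cancel₀ ε hC.ne'

lemma exists_forall_mul_norm_comp_lt_of_mem (hμ : ∀ v, 0 < μ v) {S : Set T} (hSfin : S.Finite)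
    (hμ0 : ∀ ε : ℝ, 0 < ε → ∃ N : ℝ, ∀ v ∈ φ ⁻¹' S, N ≤ dist o v → μ v < ε)
    (f : T → ℂ) {ε : ℝ} (hε : 0 < ε) :
    ∃ N : ℝ, ∀ v ∈ φ ⁻¹' S, N ≤ dist o v → μ v * ‖f (φ v)‖ < ε := by
  obtain ⟨B, hB⟩ := (hSfin.image fun w => ‖f w‖).bddAbove
  have hB1 : 0 < max B 1 := lt_max_of_lt_right one_pos
  obtain ⟨N, hN⟩ := hμ0 (ε / max B 1) (div_pos hε hB1)
  refine ⟨N, fun v hvS hv => ?_⟩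
  calc μ v * ‖f (φ v)‖ ≤ μ v * max B 1 :=
        mul_le_mul_of_nonneg_left ((hB ⟨φ v, hvS, rfl⟩).trans (le_max_left _ _)) (hμ v).le
    _ < ε / max B 1 * max B 1 := mul_lt_mul_of_pos_right (hN v hvS hv) hB1
    _ = ε := div_mul_cancel₀ ε hB1.ne'

lemma memL0_comp (hloc : ∀ M : ℝ, {v : T | dist o v ≤ M}.Finite) (hμ : ∀ v, 0 < μ v)
    (hC : 0 < C) (hφ : ∀ v, μ v ≤ C * μ (φ v)) {S : Set T} (hS : ∀ w ∉ S, (φ ⁻¹' {w}).Finite)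
    (hSfin : S.Finite) (hμ0 : ∀ ε : ℝ, 0 < ε → ∃ N : ℝ, ∀ v ∈ φ ⁻¹' S, N ≤ dist o v → μ v < ε)
    {f : T → ℂ} (hf : memL0 o μ f) : memL0 o μ (f ∘ φ) := by
  refine ⟨memL_comp hC.le hφ hf.1, fun ε hε => ?_⟩
  obtain ⟨N₁, hN₁⟩ := exists_forall_mul_norm_comp_lt_of_mem hμ hSfin hμ0 f hε
  obtain ⟨N₂, hN₂⟩ := exists_forall_mul_norm_comp_lt_of_notMem hC hφ hloc hS hf hε
  refine ⟨max N₁ N₂, fun v hv => ?_⟩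
  by_cases hvS : φ v ∈ S
  · exact hN₁ v hvS ((le_max_left _ _).trans hv)
  · exact hN₂ v hvS ((le_max_right _ _).trans hv)

end

theorem stmt_11_general {T : Type*} [MetricSpace T] (o : T)
    (hloc : ∀ M : ℝ, {v : T | dist o v ≤ M}.Finite)
    (μ : T → ℝ) (hμ : ∀ v : T, 0 < μ v) (φ : T → T)
    (hadm : Admissible μ φ)
    (S : Set T) (hS : S = {w : T | (φ ⁻¹' {w}).Infinite})
    (hSfin : S.Finite)
    (hμ0 : ∀ ε : ℝ, 0 < ε → ∃ N : ℝ, ∀ v ∈ φ ⁻¹' S, N ≤ dist o v → μ v < ε) :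
    CompBoundedL0 o μ φ := by
  obtain ⟨C, hC, hφ⟩ := hadm
  have : Nonempty T := ⟨o⟩
  have hfibre : ∀ w ∉ S, (φ ⁻¹' {w}).Finite := fun w hw =>
    Set.not_infinite.mp (by rwa [hS] at hw)
  exact ⟨fun f hf => memL0_comp hloc hμ hC hφ hfibre hSfin hμ0 hf,
    C, fun f hf => wnorm_comp_le hC.le hφ hf.1⟩

/-- Let `φ` be admissible and `S := {w ∈ T : φ⁻¹({w}) is infinite}`.
If `S` is nonempty and finite, and `μ(v) → 0` as `|v| → ∞` along `v ∈ φ⁻¹(S)`, then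
`C_φ` maps `L⁰μ(T)` into `L⁰μ(T)` and is a bounded operator on `L⁰μ(T)`. -/
theorem stmt_11 {T : Type*} [MetricSpace T] (o : T)
    (hloc : ∀ M : ℝ, {v : T | dist o v ≤ M}.Finite)
    (hunb : ∀ M : ℝ, ∃ v : T, M < dist o v)
    (μ : T → ℝ) (hμ : ∀ v : T, 0 < μ v) (φ : T → T)
    (hadm : Admissible μ φ)
    (S : Set T) (hS : S = {w : T | (φ ⁻¹' {w}).Infinite})
    (hSne : S.Nonempty) (hSfin : S.Finite)
    (hμ0 : ∀ ε : ℝ, 0 < ε → ∃ N : ℝ, ∀ v ∈ φ ⁻¹' S, N ≤ dist o v → μ v < ε) :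
    CompBoundedL0 o μ φ :=
  stmt_11_general o hloc μ hμ φ hadm S hS hSfin hμ0
end

section
/- Let g : [0,∞) → (0,∞) be an increasing function and let φ be an admissible self-map of T. If lim_{|v|→∞} min{ (g(|φ(v)|))⁻¹ , μ(v) } = 0 (i.e., for every ε > 0 there is N such that min{1/g(|φ(v)|), μ(v)} < ε whenever |v| ≥ N), then C_φ maps L⁰μ(T) into L⁰μ(T) and is a bounded operator on L⁰μ(T). -/
open Filter Set Topology

/-- Let `g : [0,∞) → (0,∞)` be increasing and `φ` admissible. If
`min{ (g(|φ(v)|))⁻¹, μ(v) } → 0` as `|v| → ∞`, then `C_φ` maps `L⁰μ(T)` into `L⁰μ(T)`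
and is a bounded operator on `L⁰μ(T)`. -/
theorem stmt_12 {T : Type*} [MetricSpace T] (o : T)
    (hloc : ∀ M : ℝ, {v : T | dist o v ≤ M}.Finite)
    (hunb : ∀ M : ℝ, ∃ v : T, M < dist o v)
    (μ : T → ℝ) (hμ : ∀ v : T, 0 < μ v) (φ : T → T)
    (g : ℝ → ℝ) (hgpos : ∀ x : ℝ, 0 ≤ x → 0 < g x)
    (hgmono : MonotoneOn g (Set.Ici (0 : ℝ)))
    (hadm : Admissible μ φ)
    (hmin : ∀ ε : ℝ, 0 < ε → ∃ N : ℝ, ∀ v : T, N ≤ dist o v →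
      min (g (dist o (φ v)))⁻¹ (μ v) < ε) :
    CompBoundedL0 o μ φ := by
  obtain ⟨C, hC, hCle⟩ := hadm
  have hι : Nonempty T := ⟨o⟩
  have key : ∀ f : T → ℂ, memL μ f → ∀ v : T,
      μ v * ‖(f ∘ φ) v‖ ≤ C * wnorm μ f := by
    intro f hf v
    calc μ v * ‖f (φ v)‖ ≤ C * μ (φ v) * ‖f (φ v)‖ :=
          mul_le_mul_of_nonneg_right (hCle v) (norm_nonneg _)
      _ = C * (μ (φ v) * ‖f (φ v)‖) := by ring
      _ ≤ C * wnorm μ f := by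
          refine mul_le_mul_of_nonneg_left ?_ hC.le
          exact le_ciSup hf (φ v)
  constructor
  · rintro f ⟨hfL, hf0⟩
    constructor
    · exact ⟨C * wnorm μ f, by rintro x ⟨v, rfl⟩; exact key f hfL v⟩
    · intro ε hε
      obtain ⟨N1, hN1⟩ := hf0 (ε / C) (div_pos hε hC)
      set N1' := max N1 0 with hN1'def
      have hS : ({w : T | dist o w ≤ N1'}).Finite := hloc N1'
      obtain ⟨K, hK⟩ := (hS.image (fun w => ‖f w‖)).bddAbove
      have hoK : ‖f o‖ ≤ K := hK ⟨o, by simp [hN1'def], rfl⟩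
      have hK0 : 0 ≤ K := le_trans (norm_nonneg _) hoK
      have hgN : 0 < g N1' := hgpos N1' (le_max_right _ _)
      set ε₀ := min (g N1')⁻¹ (ε / (K + 1)) with hε₀def
      have hε₀ : 0 < ε₀ := lt_min (inv_pos.mpr hgN) (div_pos hε (by linarith))
      obtain ⟨N, hN⟩ := hmin ε₀ hε₀
      refine ⟨N, fun v hv => ?_⟩
      have hmv := hN v hv
      by_cases hcase : dist o (φ v) ≤ N1'
      · have hg : g (dist o (φ v)) ≤ g N1' :=
          hgmono (Set.mem_Ici.mpr dist_nonneg) (Set.mem_Ici.mpr (le_max_right N1 0)) hcase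
        have hginv : (g N1')⁻¹ ≤ (g (dist o (φ v)))⁻¹ :=
          inv_anti₀ (hgpos _ dist_nonneg) hg
        have hnot : ¬ ((g (dist o (φ v)))⁻¹ < ε₀) :=
          not_lt.mpr (le_trans (min_le_left _ _) hginv)
        have hμv : μ v < ε₀ := (min_lt_iff.mp hmv).resolve_left hnot
        have hμv2 : μ v < ε / (K + 1) := lt_of_lt_of_le hμv (min_le_right _ _)
        have hfb : ‖f (φ v)‖ ≤ K := hK ⟨φ v, hcase, rfl⟩
        have h1 : μ v * (K + 1) < (ε / (K + 1)) * (K + 1) :=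
          mul_lt_mul_of_pos_right hμv2 (by linarith)
        have h2 : (ε / (K + 1)) * (K + 1) = ε := div_mul_cancel₀ ε (by linarith)
        have h3 : μ v * ‖f (φ v)‖ ≤ μ v * (K + 1) :=
          mul_le_mul_of_nonneg_left (by linarith) (hμ v).le
        calc μ v * ‖(f ∘ φ) v‖ = μ v * ‖f (φ v)‖ := rfl
          _ < ε := by linarith
      · push_neg at hcase
        have hd : N1 ≤ dist o (φ v) := le_trans (le_max_left _ _) hcase.le
        have hsm := hN1 (φ v) hd
        calc μ v * ‖(f ∘ φ) v‖ ≤ C * μ (φ v) * ‖f (φ v)‖ :=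
              mul_le_mul_of_nonneg_right (hCle v) (norm_nonneg _)
          _ = C * (μ (φ v) * ‖f (φ v)‖) := by ring
          _ < C * (ε / C) := mul_lt_mul_of_pos_left hsm hC
          _ = ε := mul_div_cancel₀ ε hC.ne'
  · refine ⟨C, fun f hf => ?_⟩
    exact ciSup_le fun v => key f hf.1 v
end

section
/- Let g : [0,∞) → (0,∞) be an increasing function, let μ be a positive function on T satisfying μ(v) = o(g(|v|)) as |v| → ∞ (i.e., μ(v)/g(|v|) → 0 as |v| → ∞), and let φ be a self-map of T. Then C_φ is a bounded operator on L⁰μ(T) if and only if φ is admissible and lim_{|v|→∞} min{ (g(|φ(v)|))⁻¹ , μ(v) } = 0. -/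
open Filter Set Topology

/-- A function bounded on each ball of a locally finite space admits a bound there. -/
lemma finite_bound' {T : Type*} [MetricSpace T] (o : T)
    (hloc : ∀ M : ℝ, {v : T | dist o v ≤ M}.Finite)
    (F : T → ℝ) (M : ℝ) :
    ∃ B : ℝ, 0 ≤ B ∧ ∀ v : T, dist o v ≤ M → F v ≤ B := by
  obtain ⟨B, hB⟩ := ((hloc M).image F).bddAbove
  exact ⟨max B 0, le_max_right _ _, fun v hv =>
    le_trans (hB (Set.mem_image_of_mem F hv)) (le_max_left _ _)⟩

/-- A function vanishing at infinity on a locally finite space is bounded. -/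
lemma bdd_of_vanish' {T : Type*} [MetricSpace T] (o : T)
    (hloc : ∀ M : ℝ, {v : T | dist o v ≤ M}.Finite)
    (F : T → ℝ)
    (hvan : ∀ ε : ℝ, 0 < ε → ∃ N : ℝ, ∀ v : T, N ≤ dist o v → F v < ε) :
    BddAbove (Set.range F) := by
  obtain ⟨N, hN⟩ := hvan 1 one_pos
  obtain ⟨B, hB0, hB⟩ := finite_bound' o hloc F N
  refine ⟨max B 1, ?_⟩
  rintro _ ⟨v, rfl⟩
  rcases le_or_gt (dist o v) N with h | h
  · exact le_trans (hB v h) (le_max_left _ _)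
  · exact le_trans (hN v h.le).le (le_max_right _ _)

/-- Let `g : [0,∞) → (0,∞)` be increasing, let `μ(v) = o(g(|v|))` as
`|v| → ∞`, and let `φ` be a self-map of `T`. Then `C_φ` is a bounded operator on
`L⁰μ(T)` if and only if `φ` is admissible and
`min{ (g(|φ(v)|))⁻¹, μ(v) } → 0` as `|v| → ∞`. -/
theorem stmt_13 {T : Type*} [MetricSpace T] (o : T)
    (hloc : ∀ M : ℝ, {v : T | dist o v ≤ M}.Finite)
    (hunb : ∀ M : ℝ, ∃ v : T, M < dist o v)
    (μ : T → ℝ) (hμ : ∀ v : T, 0 < μ v) (φ : T → T)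
    (g : ℝ → ℝ) (hgpos : ∀ x : ℝ, 0 ≤ x → 0 < g x)
    (hgmono : MonotoneOn g (Set.Ici (0 : ℝ)))
    (hlittleo : ∀ ε : ℝ, 0 < ε → ∃ N : ℝ, ∀ v : T, N ≤ dist o v →
      μ v / g (dist o v) < ε) :
    CompBoundedL0 o μ φ ↔
      (Admissible μ φ ∧
        ∀ ε : ℝ, 0 < ε → ∃ N : ℝ, ∀ v : T, N ≤ dist o v →
          min (g (dist o (φ v)))⁻¹ (μ v) < ε) := by
  classical
  have hne : Nonempty T := ⟨(hunb 0).choose⟩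
  constructor
  · rintro ⟨h1, C, h2⟩
    have key : ∀ v : T, μ v * (μ (φ v))⁻¹ ≤ C := by
      intro v
      set w := φ v with hw
      set f : T → ℂ := fun u => if u = w then ((μ w)⁻¹ : ℝ) else 0 with hf
      have hnorm : ∀ u, μ u * ‖f u‖ = if u = w then 1 else 0 := by
        intro u
        by_cases h : u = w
        · subst h
          simp [hf, abs_inv, abs_of_pos (hμ w), mul_inv_cancel₀ (hμ w).ne']
        · simp [hf, h]
      have hmem : memL0 o μ f := by
        constructor
        · refine ⟨1, ?_⟩
          rintro _ ⟨u, rfl⟩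
          show μ u * ‖f u‖ ≤ 1
          rw [hnorm u]
          split <;> norm_num
        · intro ε hε
          refine ⟨dist o w + 1, fun u hu => ?_⟩
          have hune : u ≠ w := by
            intro h; subst h; linarith
          rw [hnorm u, if_neg hune]; exact hε
      have hwnorm : wnorm μ f = 1 := by
        apply le_antisymm
        · apply ciSup_le
          intro u
          show μ u * ‖f u‖ ≤ 1
          rw [hnorm u]; split <;> norm_num
        · have h := le_ciSup hmem.1 w
          rwa [hnorm w, if_pos rfl] at h
      have hbdd : memL μ (f ∘ φ) := (h1 f hmem).1
      have hle : μ v * ‖f (φ v)‖ ≤ wnorm μ (f ∘ φ) := le_ciSup hbdd v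
      have hfw : ‖f (φ v)‖ = (μ w)⁻¹ := by
        rw [hf]; simp [← hw, abs_inv, abs_of_pos (hμ w)]
      calc μ v * (μ (φ v))⁻¹ = μ v * ‖f (φ v)‖ := by rw [hfw, hw]
        _ ≤ wnorm μ (f ∘ φ) := hle
        _ ≤ C * wnorm μ f := h2 f hmem
        _ = C := by rw [hwnorm, mul_one]
    have hC : 0 < C := by
      obtain ⟨v⟩ := hne
      exact lt_of_lt_of_le (mul_pos (hμ v) (inv_pos.2 (hμ (φ v)))) (key v)
    refine ⟨⟨C, hC, fun v => ?_⟩, ?_⟩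
    · have h := key v
      rw [← div_eq_mul_inv] at h
      exact (div_le_iff₀ (hμ (φ v))).1 h
    · by_contra hcon
      push_neg at hcon
      obtain ⟨ε, hε, hA⟩ := hcon
      set f : T → ℂ := fun u => ((g (dist o u))⁻¹ : ℝ) with hf
      have hnorm : ∀ u, ‖f u‖ = (g (dist o u))⁻¹ := fun u => by
        simp [hf, abs_of_pos (inv_pos.2 (hgpos _ dist_nonneg)), (hgpos _ dist_nonneg).le]
      have hmem : memL0 o μ f := by
        constructor
        · apply bdd_of_vanish' o hloc
          intro δ hδ
          obtain ⟨N, hN⟩ := hlittleo δ hδ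
          exact ⟨N, fun v hv => by rw [hnorm v, ← div_eq_mul_inv]; exact hN v hv⟩
        · intro δ hδ
          obtain ⟨N, hN⟩ := hlittleo δ hδ
          exact ⟨N, fun v hv => by rw [hnorm v, ← div_eq_mul_inv]; exact hN v hv⟩
      obtain ⟨N, hN⟩ := (h1 f hmem).2 (ε * ε) (mul_pos hε hε)
      obtain ⟨v, hv1, hv2⟩ := hA N
      have h3 : ε ≤ (g (dist o (φ v)))⁻¹ := le_trans hv2 (min_le_left _ _)
      have h4 : ε ≤ μ v := le_trans hv2 (min_le_right _ _)
      have h5 : ε * ε ≤ μ v * ‖f (φ v)‖ := by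
        rw [hnorm (φ v)]
        exact mul_le_mul h4 h3 hε.le (hμ v).le
      have h6 := hN v hv1
      simp only [Function.comp_apply] at h6
      linarith
  · rintro ⟨⟨C, hC, hadm⟩, hmin⟩
    have hnorm_le : ∀ (f : T → ℂ), memL μ f → ∀ v, μ v * ‖f (φ v)‖ ≤ C * wnorm μ f := by
      intro f hfL v
      calc μ v * ‖f (φ v)‖ ≤ (C * μ (φ v)) * ‖f (φ v)‖ :=
            mul_le_mul_of_nonneg_right (hadm v) (norm_nonneg _)
        _ = C * (μ (φ v) * ‖f (φ v)‖) := by ring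
        _ ≤ C * wnorm μ f := mul_le_mul_of_nonneg_left (le_ciSup hfL (φ v)) hC.le
    have hvan : ∀ (f : T → ℂ), memL0 o μ f → ∀ ε : ℝ, 0 < ε →
        ∃ N, ∀ v, N ≤ dist o v → μ v * ‖f (φ v)‖ < ε := by
      intro f hf ε hε
      obtain ⟨N2, hN2⟩ := hf.2 (ε / C) (div_pos hε hC)
      set N2' := max N2 0 with hN2'def
      obtain ⟨B, hB0, hB⟩ := finite_bound' o hloc (fun u => ‖f u‖) N2'
      have hB1 : 0 < B + 1 := by linarith
      set δ := min (ε / (B + 1)) (g N2')⁻¹ with hδdef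
      have hδ : 0 < δ := lt_min (div_pos hε hB1) (inv_pos.2 (hgpos _ (le_max_right _ _)))
      obtain ⟨N3, hN3⟩ := hmin δ hδ
      refine ⟨N3, fun v hv => ?_⟩
      rcases le_or_gt (dist o (φ v)) N2' with hcase | hcase
      · have hg : (g N2')⁻¹ ≤ (g (dist o (φ v)))⁻¹ := by
          have hgle : g (dist o (φ v)) ≤ g N2' :=
            hgmono (Set.mem_Ici.2 dist_nonneg) (Set.mem_Ici.2 (le_max_right _ _)) hcase
          exact inv_anti₀ (hgpos _ dist_nonneg) hgle
        have hmlt := hN3 v hv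
        have hμv : μ v < δ := by
          by_contra hge
          push_neg at hge
          have hmin2 : δ ≤ min (g (dist o (φ v)))⁻¹ (μ v) :=
            le_min (le_trans (min_le_right _ _) hg) hge
          linarith
        calc μ v * ‖f (φ v)‖ ≤ μ v * B :=
              mul_le_mul_of_nonneg_left (hB (φ v) hcase) (hμ v).le
          _ ≤ δ * B := mul_le_mul_of_nonneg_right hμv.le hB0
          _ ≤ (ε / (B + 1)) * B := mul_le_mul_of_nonneg_right (min_le_left _ _) hB0
          _ < ε := by rw [div_mul_eq_mul_div, div_lt_iff₀ hB1]; nlinarith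
      · have h6 := hN2 (φ v) (le_trans (le_max_left _ _) hcase.le)
        calc μ v * ‖f (φ v)‖ ≤ (C * μ (φ v)) * ‖f (φ v)‖ :=
              mul_le_mul_of_nonneg_right (hadm v) (norm_nonneg _)
          _ = C * (μ (φ v) * ‖f (φ v)‖) := by ring
          _ < C * (ε / C) := mul_lt_mul_of_pos_left h6 hC
          _ = ε := by field_simp
    refine ⟨fun f hf => ⟨?_, ?_⟩, C, fun f hf => ?_⟩
    · refine ⟨C * wnorm μ f, ?_⟩
      rintro _ ⟨v, rfl⟩
      exact hnorm_le f hf.1 v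
    · exact fun ε hε => hvan f hf ε hε
    · exact ciSup_le fun v => hnorm_le f hf.1 v
end

section
/- Let T be a set, let X be a linear subspace of the complex-valued functions on T equipped with a norm under which it is a Banach space, and assume that for every w ∈ T the point evaluation functional e_w : f ↦ f(w) is a continuous linear functional on X which is not identically zero (i.e., there exists f ∈ X with f(w) ≠ 0). Let φ : T → T be a self-map such that C_φ f := f ∘ φ defines a bounded operator on X. If C_φ is hypercyclic on X, then φ has no periodic points: there is no w ∈ T and p ∈ ℕ, p ≥ 1, with φ^p(w) = w. -/
open Filter Set Topology

/-- Let `X` be a functional Banach space of complex-valued functions on a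
set `T` (realized via an injective linear map `ι : X →ₗ[ℂ] (T → ℂ)`), on which every
point evaluation `e_w : f ↦ (ι f) w` is continuous and not identically zero. If
`C_φ f = f ∘ φ` defines a bounded operator on `X` which is hypercyclic, then `φ` has no
periodic points. -/
theorem stmt_14 {T : Type*} {X : Type*}
    [NormedAddCommGroup X] [NormedSpace ℂ X] [CompleteSpace X]
    (ι : X →ₗ[ℂ] (T → ℂ)) (hinj : Function.Injective ι)
    (heval_cont : ∀ w : T, Continuous fun f : X => ι f w)
    (heval_ne : ∀ w : T, ∃ f : X, ι f w ≠ 0)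
    (φ : T → T) (Cφ : X →L[ℂ] X) (hCφ : ∀ f : X, ι (Cφ f) = (ι f) ∘ φ)
    (hhyp : ∃ x : X, Dense (Set.range fun n : ℕ => (Cφ ^ n) x)) :
    ¬ ∃ w : T, ∃ p : ℕ, 1 ≤ p ∧ φ^[p] w = w := by
  rintro ⟨w, p, hp, hw⟩
  obtain ⟨x, hx⟩ := hhyp
  have hiter : ∀ n : ℕ, ∀ f : X, ι ((Cφ ^ n) f) = (ι f) ∘ φ^[n] := by
    intro n
    induction n with
    | zero => intro f; simp
    | succ n ih =>
      intro f
      have h1 : (Cφ ^ (n + 1)) f = (Cφ ^ n) (Cφ f) := by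
        rw [pow_succ]; rfl
      rw [h1, ih (Cφ f), hCφ f, Function.iterate_succ']
      rfl
  have key : ∀ n : ℕ, φ^[n] w = φ^[n % p] w := by
    intro n
    conv_lhs => rw [← Nat.mod_add_div n p]
    rw [Function.iterate_add_apply, Function.iterate_mul]
    congr 1
    exact Function.iterate_fixed hw _
  set e : X → ℂ := fun f => ι f w with he
  have hsub : e '' (Set.range fun n : ℕ => (Cφ ^ n) x) ⊆
      (fun k : ℕ => ι x (φ^[k] w)) '' (Set.Iio p) := by
    rintro _ ⟨_, ⟨n, rfl⟩, rfl⟩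
    refine ⟨n % p, Nat.mod_lt n hp, ?_⟩
    simp only [he, hiter n x, Function.comp_apply]
    exact congrArg (ι x) (key n).symm
  have hfin : ((fun k : ℕ => ι x (φ^[k] w)) '' (Set.Iio p)).Finite :=
    (Set.finite_Iio p).image _
  have hdense : (Set.univ : Set ℂ) ⊆ closure (e '' (Set.range fun n : ℕ => (Cφ ^ n) x)) := by
    intro z _
    obtain ⟨f, hf⟩ := heval_ne w
    have hz : z = e ((z / ι f w) • f) := by
      simp only [he, map_smul, Pi.smul_apply, smul_eq_mul]
      field_simp
    have : z ∈ e '' closure (Set.range fun n : ℕ => (Cφ ^ n) x) := by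
      rw [hx.closure_eq]
      exact ⟨_, trivial, hz.symm⟩
    exact image_closure_subset_closure_image (heval_cont w) this
  have : (Set.univ : Set ℂ) ⊆ (fun k : ℕ => ι x (φ^[k] w)) '' (Set.Iio p) := by
    refine hdense.trans ?_
    rw [← hfin.isClosed.closure_eq]
    exact closure_mono hsub
  exact Set.infinite_univ (hfin.subset this)
end

section
/- Let (X,d) be a metric space and φ a self-map of X. If φ has no periodic points (there is no x ∈ X and integer p ≥ 1 with φ^p(x) = x), then φ is a run-away function: for every finite set I ⊆ X there exists N ∈ ℕ such that φⁿ(I) ∩ I = ∅ for every n ≥ N. -/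
open Filter Set Topology

/-- Let `(X,d)` be a metric space and `φ` a self-map of `X`. If `φ` has no
periodic points, then `φ` is a run-away function: for every finite set `I ⊆ X` there
exists `N ∈ ℕ` such that `φⁿ(I) ∩ I = ∅` for every `n ≥ N`. -/
theorem stmt_15 {X : Type*} [MetricSpace X] (φ : X → X)
    (hper : ¬ ∃ x : X, ∃ p : ℕ, 1 ≤ p ∧ φ^[p] x = x) :
    ∀ I : Set X, I.Finite → ∃ N : ℕ, ∀ n : ℕ, N ≤ n → (φ^[n] '' I) ∩ I = ∅ := by
  push_neg at hper
  intro I hI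
  have aux : ∀ x y : X, ∀ n m : ℕ, n < m → φ^[n] x = y → φ^[m] x = y → False := by
    intro x y n m hlt hn hm
    have hy : φ^[m - n] y = y := by
      rw [show m = (m - n) + n by omega, Function.iterate_add_apply, hn] at hm
      exact hm
    exact hper y (m - n) (by omega) hy
  have key : ∀ x y : X, {n : ℕ | φ^[n] x = y}.Subsingleton := by
    intro x y n hn m hm
    simp only [mem_setOf_eq] at hn hm
    rcases lt_trichotomy n m with h | h | h
    · exact absurd (aux x y n m h hn hm) (not_false)
    · exact h
    · exact absurd (aux x y m n h hm hn) (not_false)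
  have hS : ({n : ℕ | ∃ x ∈ I, φ^[n] x ∈ I}).Finite := by
    have hsub : {n : ℕ | ∃ x ∈ I, φ^[n] x ∈ I} ⊆
        ⋃ x ∈ I, ⋃ y ∈ I, {n | φ^[n] x = y} := by
      rintro n ⟨x, hx, hy⟩
      exact mem_biUnion hx (mem_biUnion hy rfl)
    exact ((hI.biUnion fun x _ => hI.biUnion fun y _ =>
      (key x y).finite).subset hsub)
  obtain ⟨N, hN⟩ := hS.bddAbove
  refine ⟨N + 1, fun n hn => ?_⟩
  ext z
  simp only [mem_inter_iff, mem_image, mem_empty_iff_false, iff_false, not_and]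
  rintro ⟨x, hx, rfl⟩ hz
  have hmem : n ∈ {n : ℕ | ∃ x ∈ I, φ^[n] x ∈ I} := ⟨x, hx, hz⟩
  have := hN hmem
  omega
end

section
/- Let T be a set, let X be a linear subspace of the complex-valued functions on T equipped with a norm under which it is a Banach space, and assume that for every w ∈ T the point evaluation functional e_w : f ↦ f(w) is a continuous linear functional on X, and that the point evaluations separate points (for distinct v, w ∈ T there exists f ∈ X with f(v) ≠ f(w)). Let φ : T → T be a self-map such that C_φ f := f ∘ φ defines a bounded operator on X. If φ is not injective, then C_φ is not hypercyclic on X. -/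
open Filter Set Topology

/-- Let `X` be a functional Banach space of complex-valued functions on a
set `T` (realized via an injective linear map `ι : X →ₗ[ℂ] (T → ℂ)`), on which every
point evaluation `e_w : f ↦ (ι f) w` is continuous, and whose point evaluations separate
points of `T`. If `C_φ f = f ∘ φ` defines a bounded operator on `X` and `φ` is not
injective, then `C_φ` is not hypercyclic on `X`. -/
theorem stmt_16 {T : Type*} {X : Type*}
    [NormedAddCommGroup X] [NormedSpace ℂ X] [CompleteSpace X]
    (ι : X →ₗ[ℂ] (T → ℂ)) (hinj : Function.Injective ι)
    (heval_cont : ∀ w : T, Continuous fun f : X => ι f w)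
    (hsep : ∀ v w : T, v ≠ w → ∃ f : X, ι f v ≠ ι f w)
    (φ : T → T) (Cφ : X →L[ℂ] X) (hCφ : ∀ f : X, ι (Cφ f) = (ι f) ∘ φ)
    (hninj : ¬ Function.Injective φ) :
    ¬ ∃ x : X, Dense (Set.range fun n : ℕ => (Cφ ^ n) x) := by
  rintro ⟨x, hx⟩
  simp only [Function.Injective, not_forall] at hninj
  obtain ⟨v, w, hφ, hvw⟩ := hninj
  obtain ⟨g, hg⟩ := hsep v w hvw
  set S : Set X := {f | ι f v = ι f w} with hS
  have hSclosed : IsClosed S := isClosed_eq (heval_cont v) (heval_cont w)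
  have horb : ∀ n : ℕ, 0 < n → (Cφ ^ n) x ∈ S := by
    intro n hn
    obtain ⟨m, rfl⟩ := Nat.exists_eq_succ_of_ne_zero hn.ne'
    have h1 : (Cφ ^ (m + 1)) x = Cφ ((Cφ ^ m) x) := by
      rw [pow_succ']; rfl
    rw [h1]
    show ι (Cφ ((Cφ ^ m) x)) v = ι (Cφ ((Cφ ^ m) x)) w
    rw [hCφ]
    simp [Function.comp, hφ]
  have hsub : Set.range (fun n : ℕ => (Cφ ^ n) x) ⊆ insert x S := by
    rintro _ ⟨n, rfl⟩
    rcases Nat.eq_zero_or_pos n with h | h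
    · subst h; simp
    · exact Set.mem_insert_iff.2 (Or.inr (horb n h))
  have hclosed : IsClosed (insert x S) := by rw [Set.insert_eq]; exact isClosed_singleton.union hSclosed
  have hall : ∀ y : X, y ∈ insert x S := fun y =>
    closure_minimal hsub hclosed (hx y)
  by_cases hxe : ι x v = ι x w
  · rcases hall g with rfl | hgS
    · exact hg hxe
    · exact hg hgS
  · have hx0 : x ≠ 0 := by
      intro h; subst h; simp at hxe
    rcases hall ((2 : ℂ) • x) with heq | hmem
    · apply hx0
      have h2 : (2 : ℂ) • x - x = 0 := by rw [heq]; simp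
      have : ((2 : ℂ) - 1) • x = 0 := by
        rw [sub_smul, one_smul]; exact h2
      have h21 : ((2 : ℂ) - 1) ≠ 0 := by norm_num
      exact (smul_eq_zero.mp this).resolve_left h21
    · apply hxe
      have : ι ((2 : ℂ) • x) v = ι ((2 : ℂ) • x) w := hmem
      rw [map_smul] at this
      simp only [Pi.smul_apply, smul_eq_mul] at this
      exact mul_left_cancel₀ (by norm_num : (2:ℂ) ≠ 0) this
end

section
/- Let φ be a self-map of T such that C_φ is a bounded operator on L⁰μ(T). If φ is surjective and μ(φ(v)) ≤ μ(v) for every v ∈ T, then C_φ is not hypercyclic on L⁰μ(T). -/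
open Filter Set Topology

/-!
If `f` had a dense orbit, some `f ∘ φⁿ` would be arbitrarily close to `0`. Since `φⁿ` is onto and
`μ` does not increase along `φ`, every value `μ(w)|f(w)|` is dominated by `‖f ∘ φⁿ‖_μ`, so `f = 0`.
But the orbit of `0` is `{0}`, which does not approximate the point mass at `o`.
-/

section WeightedNorm

variable {T : Type*} (μ : T → ℝ)

theorem mul_norm_le_wnorm {f : T → ℂ} (hf : memL μ f) (v : T) : μ v * ‖f v‖ ≤ wnorm μ f :=
  le_ciSup hf v

theorem wnorm_neg (f : T → ℂ) : wnorm μ (fun v => -f v) = wnorm μ f := by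
  simp only [wnorm, norm_neg]

variable {μ}

theorem weight_iterate_le {φ : T → T} (hdec : ∀ v, μ (φ v) ≤ μ v) (n : ℕ) (v : T) :
    μ (φ^[n] v) ≤ μ v := by
  induction n with
  | zero => rfl
  | succ n ih => exact (Function.iterate_succ_apply' φ n v ▸ hdec _).trans ih

theorem mul_norm_le_wnorm_comp_of_surjective {ψ : T → T} (hψ : Function.Surjective ψ)
    (hdec : ∀ v, μ (ψ v) ≤ μ v) {f : T → ℂ} (hf : memL μ (f ∘ ψ)) (w : T) :
    μ w * ‖f w‖ ≤ wnorm μ (f ∘ ψ) := by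
  obtain ⟨v, rfl⟩ := hψ w
  calc μ (ψ v) * ‖f (ψ v)‖ ≤ μ v * ‖f (ψ v)‖ := by gcongr; exact hdec v
    _ ≤ wnorm μ (f ∘ ψ) := mul_norm_le_wnorm μ hf v

end WeightedNorm

section LittleSpace

variable {T : Type*} [MetricSpace T] (o : T) (μ : T → ℝ)

theorem memL0_zero : memL0 o μ 0 :=
  ⟨⟨0, by rintro _ ⟨v, rfl⟩; simp⟩, fun _ hε => ⟨0, fun v _ => by simpa using hε⟩⟩

theorem memL0_single [DecidableEq T] (a : ℂ) : memL0 o μ (Pi.single o a) := by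
  refine ⟨((finite_singleton 0).insert (μ o * ‖a‖)).bddAbove.mono ?_,
    fun ε hε => ⟨1, fun v hv => ?_⟩⟩
  · rintro _ ⟨v, rfl⟩
    rcases eq_or_ne v o with rfl | hvo
    · simp
    · simp [hvo]
  · have hvo : v ≠ o := by rintro rfl; simp at hv; linarith
    simpa [hvo] using hε

variable {o μ}

theorem memL0.comp_iterate {φ : T → T} (hφ : ∀ f, memL0 o μ f → memL0 o μ (f ∘ φ))
    {f : T → ℂ} (hf : memL0 o μ f) (n : ℕ) : memL0 o μ (f ∘ φ^[n]) := by
  induction n with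
  | zero => exact hf
  | succ n ih => simpa only [Function.iterate_succ, ← Function.comp_assoc] using hφ _ ih

end LittleSpace

theorem stmt_17_general {T : Type*} [MetricSpace T] (o : T)
    (μ : T → ℝ) (hμ : ∀ v : T, 0 < μ v) (φ : T → T)
    (hb : CompBoundedL0 o μ φ)
    (hsurj : Function.Surjective φ)
    (hdec : ∀ v : T, μ (φ v) ≤ μ v) :
    ¬ ∃ f : T → ℂ, memL0 o μ f ∧
        ∀ g : T → ℂ, memL0 o μ g → ∀ ε : ℝ, 0 < ε →
          ∃ n : ℕ, wnorm μ (fun v => f (φ^[n] v) - g v) < ε := by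
  classical
  rintro ⟨f, hf, hdense⟩
  have hf0 : f = 0 := funext fun w => by
    by_contra hw
    obtain ⟨n, hn⟩ := hdense 0 (memL0_zero o μ) _ (mul_pos (hμ w) (norm_pos_iff.2 hw))
    simp only [Pi.zero_apply, sub_zero] at hn
    exact (mul_norm_le_wnorm_comp_of_surjective (hsurj.iterate n) (weight_iterate_le hdec n)
      (hf.comp_iterate hb.1 n).1 w).not_gt hn
  subst hf0
  obtain ⟨n, hn⟩ := hdense _ (memL0_single o μ 1) (μ o) (hμ o)
  simp only [Pi.zero_apply, zero_sub, wnorm_neg] at hn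
  have hle := mul_norm_le_wnorm μ (memL0_single o μ 1).1 o
  simp only [Pi.single_eq_same, norm_one, mul_one] at hle
  linarith

/-- Suppose `C_φ` is a bounded operator on `L⁰μ(T)`. If `φ` is surjective
and `μ(φ(v)) ≤ μ(v)` for every `v ∈ T`, then `C_φ` is not hypercyclic on `L⁰μ(T)`:
no `f ∈ L⁰μ(T)` has a `C_φ`-orbit `{f ∘ φⁿ : n ∈ ℕ₀}` that is dense in `L⁰μ(T)`. -/
theorem stmt_17 {T : Type*} [MetricSpace T] (o : T)
    (hloc : ∀ M : ℝ, {v : T | dist o v ≤ M}.Finite)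
    (hunb : ∀ M : ℝ, ∃ v : T, M < dist o v)
    (μ : T → ℝ) (hμ : ∀ v : T, 0 < μ v) (φ : T → T)
    (hb : CompBoundedL0 o μ φ)
    (hsurj : Function.Surjective φ)
    (hdec : ∀ v : T, μ (φ v) ≤ μ v) :
    ¬ ∃ f : T → ℂ, memL0 o μ f ∧
        ∀ g : T → ℂ, memL0 o μ g → ∀ ε : ℝ, 0 < ε →
          ∃ n : ℕ, wnorm μ (fun v => f (φ^[n] v) - g v) < ε :=
  stmt_17_general o μ hμ φ hb hsurj hdec
end

section
/- Let φ be an injective self-map of T such that C_φ is a bounded operator on L⁰μ(T). Suppose there exists a strictly increasing sequence {n_k} of positive integers such that μ(φ^{n_k}(v)) → 0 as k → ∞ for every v ∈ T, and μ(φ^{-n_k}(v)) → 0 as k → ∞ for every v ∈ T^∞, where for v ∈ T^∞ and n ∈ ℕ, φ^{-n}(v) denotes the unique u ∈ T with φⁿ(u) = v. Then C_φ is hypercyclic on L⁰μ(T). -/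
open Filter Set Topology

/-! ### Auxiliary machinery -/

namespace Stmt18Aux

noncomputable def recAux (step : ℕ → (ℕ → ℕ) → ℕ) : ℕ → ℕ → ℕ
  | 0 => fun _ => 0
  | i+1 => Function.update (recAux step i) i (step i (recAux step i))

lemma recAux_prefix (step : ℕ → (ℕ → ℕ) → ℕ) (i j : ℕ) (h : j < i) :
    recAux step i j = recAux step (j+1) j := by
  induction i with
  | zero => omega
  | succ i ih =>
    rcases Nat.lt_succ_iff_lt_or_eq.mp h with h' | h'
    · have : recAux step (i+1) j = recAux step i j := by
        simp [recAux, Function.update_of_ne (by omega : j ≠ i)]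
      rw [this, ih h']
    · subst h'; rfl

theorem exists_rec (Q : ℕ → (ℕ → ℕ) → ℕ → Prop)
    (hq : ∀ i prev, ∃ κ, Q i prev κ)
    (hcompat : ∀ i (prev prev' : ℕ → ℕ), (∀ j, j < i → prev j = prev' j) →
      ∀ κ, Q i prev κ → Q i prev' κ) :
    ∃ k : ℕ → ℕ, ∀ i, Q i k (k i) := by
  classical
  let step : ℕ → (ℕ → ℕ) → ℕ := fun i prev => (hq i prev).choose
  let k : ℕ → ℕ := fun i => recAux step (i+1) i
  refine ⟨k, fun i => ?_⟩
  have hk : ∀ j, j < i → recAux step i j = k j := fun j hj => recAux_prefix step i j hj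
  have h1 : Q i (recAux step i) (step i (recAux step i)) := (hq i _).choose_spec
  have h2 : k i = step i (recAux step i) := by
    show recAux step (i+1) i = _
    simp [recAux]
  rw [h2]; exact hcompat i _ k hk _ h1

lemma wnorm_le {T : Type*} [Nonempty T] (μ : T → ℝ) (f : T → ℂ) (c : ℝ)
    (h : ∀ v, μ v * ‖f v‖ ≤ c) : wnorm μ f ≤ c :=
  ciSup_le h

lemma le_wnorm {T : Type*} (μ : T → ℝ) (f : T → ℂ) (h : memL μ f) (v : T) :
    μ v * ‖f v‖ ≤ wnorm μ f :=
  le_ciSup h v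

lemma wnorm_nonneg {T : Type*} (μ : T → ℝ) (hμ : ∀ v, 0 ≤ μ v) (f : T → ℂ)
    (h : memL μ f) (v : T) : 0 ≤ wnorm μ f :=
  le_trans (mul_nonneg (hμ v) (norm_nonneg _)) (le_wnorm μ f h v)

lemma finsupp_memL0 {T : Type*} [MetricSpace T] (o : T) (μ : T → ℝ) (f : T → ℂ)
    (hf : {v : T | f v ≠ 0}.Finite) : memL0 o μ f := by
  constructor
  · have : (Set.range fun v : T => μ v * ‖f v‖) ⊆
        insert 0 ((fun v => μ v * ‖f v‖) '' {v | f v ≠ 0}) := by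
      rintro x ⟨v, rfl⟩
      by_cases h : f v = 0
      · left; simp [h]
      · right; exact ⟨v, h, rfl⟩
    exact (((hf.image _).insert 0).subset this).bddAbove
  · intro ε hε
    obtain ⟨N, hN⟩ := (hf.image (dist o)).bddAbove
    refine ⟨N + 1, fun v hv => ?_⟩
    have : f v = 0 := by
      by_contra h
      have := hN ⟨v, h, rfl⟩
      linarith
    simp [this, hε]

noncomputable def q2c (q : ℚ × ℚ) : ℂ := (q.1 : ℂ) + (q.2 : ℂ) * Complex.I

lemma q2c_zero : q2c 0 = 0 := by simp [q2c]

lemma q2c_dense (z : ℂ) (δ : ℝ) (hδ : 0 < δ) : ∃ q : ℚ × ℚ, ‖z - q2c q‖ < δ := by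
  have h1 : ∃ q : ℚ, |z.re - q| < δ/3 := by
    obtain ⟨q, h1, h2⟩ := exists_rat_btwn (show z.re < z.re + δ/3 by linarith)
    exact ⟨q, abs_sub_lt_iff.2 ⟨by linarith, by linarith⟩⟩
  have h2 : ∃ q : ℚ, |z.im - q| < δ/3 := by
    obtain ⟨q, h1, h2⟩ := exists_rat_btwn (show z.im < z.im + δ/3 by linarith)
    exact ⟨q, abs_sub_lt_iff.2 ⟨by linarith, by linarith⟩⟩
  obtain ⟨q1, hq1⟩ := h1
  obtain ⟨q2, hq2⟩ := h2
  refine ⟨(q1, q2), ?_⟩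
  have h3 : ‖z - q2c (q1, q2)‖ ≤ |(z - q2c (q1, q2)).re| + |(z - q2c (q1, q2)).im| :=
    Complex.norm_le_abs_re_add_abs_im _
  have hre : (z - q2c (q1, q2)).re = z.re - q1 := by simp [q2c]
  have him : (z - q2c (q1, q2)).im = z.im - q2 := by simp [q2c]
  rw [hre, him] at h3
  calc ‖z - q2c (q1, q2)‖ ≤ |z.re - q1| + |z.im - q2| := h3
    _ < δ := by linarith

lemma comp_iterate {T : Type*} [MetricSpace T] [Nonempty T] (o : T) (μ : T → ℝ)
    (hμ : ∀ v : T, 0 < μ v) (φ : T → T) (hb : CompBoundedL0 o μ φ) :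
    ∃ C : ℝ, 1 ≤ C ∧ ∀ f : T → ℂ, memL0 o μ f → ∀ m : ℕ,
      memL0 o μ (f ∘ φ^[m]) ∧ wnorm μ (f ∘ φ^[m]) ≤ C ^ m * wnorm μ f := by
  obtain ⟨hmap, C₀, hC₀⟩ := hb
  refine ⟨max C₀ 1, le_max_right _ _, fun f hf m => ?_⟩
  induction m with
  | zero =>
    have h0 : f ∘ φ^[0] = f := by rw [Function.iterate_zero, Function.comp_id]
    rw [h0]
    exact ⟨hf, by simp⟩
  | succ m ih =>
    have h1 : f ∘ φ^[m+1] = (f ∘ φ^[m]) ∘ φ := by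
      rw [Function.iterate_succ]; rfl
    have hmem : memL0 o μ ((f ∘ φ^[m]) ∘ φ) := hmap _ ih.1
    refine ⟨h1 ▸ hmem, ?_⟩
    rw [h1]
    have hw0 : 0 ≤ wnorm μ (f ∘ φ^[m]) :=
      wnorm_nonneg μ (fun v => (hμ v).le) _ ih.1.1 (Classical.arbitrary T)
    calc wnorm μ ((f ∘ φ^[m]) ∘ φ) ≤ C₀ * wnorm μ (f ∘ φ^[m]) := hC₀ _ ih.1
      _ ≤ max C₀ 1 * wnorm μ (f ∘ φ^[m]) :=
          mul_le_mul_of_nonneg_right (le_max_left _ _) hw0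
      _ ≤ max C₀ 1 * (max C₀ 1 ^ m * wnorm μ f) :=
          mul_le_mul_of_nonneg_left ih.2 (by positivity)
      _ = max C₀ 1 ^ (m+1) * wnorm μ f := by ring

/-- The recursive stage conditions. -/
def Qpred {T : Type*} (μ : T → ℝ) (φ : T → T) (n : ℕ → ℕ) (gi : ℕ → T → ℂ)
    (S : ℕ → Finset T) (Cb : ℝ) (i : ℕ) (prev : ℕ → ℕ) (κ : ℕ) : Prop :=
  (∀ v ∈ S i, μ (φ^[n κ] v) * ‖gi i v‖ ≤
      (4:ℝ)⁻¹ ^ i / Cb ^ ((Finset.range i).sup fun j => n (prev j))) ∧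
  (∀ j, j < i → ∀ v ∈ S i, ∀ v' ∈ S j, φ^[n κ] v ≠ φ^[n (prev j)] v') ∧
  (∀ j, j < i → ∀ v ∈ S j, ∀ u : T,
      φ^[n κ] u = φ^[n (prev j)] v → μ u * ‖gi j v‖ ≤ (4:ℝ)⁻¹ ^ i)

lemma Qpred_compat {T : Type*} (μ : T → ℝ) (φ : T → T) (n : ℕ → ℕ) (gi : ℕ → T → ℂ)
    (S : ℕ → Finset T) (Cb : ℝ) (i : ℕ) (prev prev' : ℕ → ℕ)
    (h : ∀ j, j < i → prev j = prev' j) (κ : ℕ)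
    (hq : Qpred μ φ n gi S Cb i prev κ) : Qpred μ φ n gi S Cb i prev' κ := by
  obtain ⟨q1, q2, q3⟩ := hq
  have hsup : ((Finset.range i).sup fun j => n (prev j)) =
      ((Finset.range i).sup fun j => n (prev' j)) :=
    Finset.sup_congr rfl (fun j hj => by rw [h j (Finset.mem_range.1 hj)])
  refine ⟨by rw [← hsup]; exact q1, ?_, ?_⟩
  · intro j hj v hv v' hv'
    rw [← h j hj]
    exact q2 j hj v hv v' hv'
  · intro j hj v hv u hu
    exact q3 j hj v hv u (by rwa [h j hj])

lemma Qpred_ex {T : Type*} [MetricSpace T] (μ : T → ℝ) (hμ : ∀ v : T, 0 < μ v)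
    (φ : T → T) (n : ℕ → ℕ) (hmono : StrictMono n)
    (hfwd : ∀ v : T, Tendsto (fun k : ℕ => μ (φ^[n k] v)) atTop (nhds 0))
    (hbwd : ∀ v : T, (∀ m : ℕ, ∃ u : T, φ^[m] u = v) →
      ∀ ε : ℝ, 0 < ε → ∃ K : ℕ, ∀ k : ℕ, K ≤ k → ∀ u : T, φ^[n k] u = v → μ u < ε)
    (gi : ℕ → T → ℂ) (S : ℕ → Finset T) (Cb : ℝ) (hCb : 0 < Cb)
    (i : ℕ) (prev : ℕ → ℕ) : ∃ κ, Qpred μ φ n gi S Cb i prev κ := by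
  set b : ℝ := (4:ℝ)⁻¹ ^ i / Cb ^ ((Finset.range i).sup fun j => n (prev j)) with hb_def
  have hb0 : 0 < b := by positivity
  have h1 : ∀ᶠ κ in atTop, ∀ v ∈ S i, μ (φ^[n κ] v) * ‖gi i v‖ ≤ b := by
    have step : ∀ v ∈ (↑(S i) : Set T), ∀ᶠ κ in atTop, μ (φ^[n κ] v) * ‖gi i v‖ ≤ b := by
      intro v hv
      by_cases hg : gi i v = 0
      · exact Eventually.of_forall (fun κ => by simp [hg, hb0.le])
      · have hn : 0 < ‖gi i v‖ := norm_pos_iff.2 hg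
        have := (hfwd v).eventually_lt_const (show 0 < b / ‖gi i v‖ by positivity)
        exact this.mono fun κ hκ => le_of_lt ((lt_div_iff₀ hn).1 hκ)
    have := (eventually_all_finite (S i).finite_toSet).2 step
    exact this.mono fun κ h v hv => h v (Finset.mem_coe.2 hv)
  have h2 : ∀ᶠ κ in atTop, ∀ j, j < i → ∀ v ∈ S i, ∀ v' ∈ S j,
      φ^[n κ] v ≠ φ^[n (prev j)] v' := by
    have step : ∀ j ∈ Set.Iio i, ∀ᶠ κ in atTop, ∀ v ∈ S i, ∀ v' ∈ S j,
        φ^[n κ] v ≠ φ^[n (prev j)] v' := by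
      intro j hj
      have step2 : ∀ v ∈ (↑(S i) : Set T), ∀ᶠ κ in atTop, ∀ v' ∈ S j,
          φ^[n κ] v ≠ φ^[n (prev j)] v' := by
        intro v hv
        have step3 : ∀ v' ∈ (↑(S j) : Set T), ∀ᶠ κ in atTop,
            φ^[n κ] v ≠ φ^[n (prev j)] v' := by
          intro v' hv'
          have := (hfwd v).eventually_lt_const (hμ (φ^[n (prev j)] v'))
          exact this.mono fun κ hκ heq => absurd hκ (by rw [heq]; exact lt_irrefl _)
        have := (eventually_all_finite (S j).finite_toSet).2 step3
        exact this.mono fun κ h v' hv' => h v' (Finset.mem_coe.2 hv')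
      have := (eventually_all_finite (S i).finite_toSet).2 step2
      exact this.mono fun κ h v hv => h v (Finset.mem_coe.2 hv)
    have := (eventually_all_finite (Set.finite_Iio i)).2 step
    exact this.mono fun κ h j hj => h j (Set.mem_Iio.2 hj)
  have h3 : ∀ᶠ κ in atTop, ∀ j, j < i → ∀ v ∈ S j, ∀ u : T,
      φ^[n κ] u = φ^[n (prev j)] v → μ u * ‖gi j v‖ ≤ (4:ℝ)⁻¹ ^ i := by
    have step : ∀ j ∈ Set.Iio i, ∀ᶠ κ in atTop, ∀ v ∈ S j, ∀ u : T,
        φ^[n κ] u = φ^[n (prev j)] v → μ u * ‖gi j v‖ ≤ (4:ℝ)⁻¹ ^ i := by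
      intro j hj
      have step2 : ∀ v ∈ (↑(S j) : Set T), ∀ᶠ κ in atTop, ∀ u : T,
          φ^[n κ] u = φ^[n (prev j)] v → μ u * ‖gi j v‖ ≤ (4:ℝ)⁻¹ ^ i := by
        intro v hv
        by_cases hall : ∀ m₀ : ℕ, ∃ u : T, φ^[m₀] u = φ^[n (prev j)] v
        · by_cases hg : gi j v = 0
          · exact Eventually.of_forall (fun κ u hu => by
              simp only [hg, norm_zero, mul_zero]
              positivity)
          · have hn : 0 < ‖gi j v‖ := norm_pos_iff.2 hg
            obtain ⟨K, hK⟩ := hbwd _ hall ((4:ℝ)⁻¹ ^ i / ‖gi j v‖) (by positivity)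
            refine eventually_atTop.2 ⟨K, fun κ hκ u hu => ?_⟩
            have := hK κ hκ u hu
            exact le_of_lt ((lt_div_iff₀ hn).1 this)
        · push_neg at hall
          obtain ⟨m₀, hm₀⟩ := hall
          refine eventually_atTop.2 ⟨m₀, fun κ hκ u hu => ?_⟩
          exfalso
          apply hm₀ (φ^[n κ - m₀] u)
          have hle : m₀ ≤ n κ := le_trans hκ hmono.le_apply
          calc φ^[m₀] (φ^[n κ - m₀] u) = φ^[m₀ + (n κ - m₀)] u :=
                (Function.iterate_add_apply φ m₀ _ u).symm
            _ = φ^[n κ] u := by rw [Nat.add_sub_cancel' hle]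
            _ = φ^[n (prev j)] v := hu
      have := (eventually_all_finite (S j).finite_toSet).2 step2
      exact this.mono fun κ h v hv => h v (Finset.mem_coe.2 hv)
    have := (eventually_all_finite (Set.finite_Iio i)).2 step
    exact this.mono fun κ h j hj => h j (Set.mem_Iio.2 hj)
  exact ((h1.and (h2.and h3)).exists)

end Stmt18Aux

open Stmt18Aux in
/-- Let `φ` be injective with `C_φ` bounded on `L⁰μ(T)`. If there is a
strictly increasing sequence `{n_k}` of positive integers with `μ(φ^{n_k}(v)) → 0` for
every `v ∈ T`, and `μ(φ^{-n_k}(v)) → 0` for every `v ∈ T^∞` (where `φ^{-n}(v)` is the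
unique `u` with `φⁿ(u) = v`), then `C_φ` is hypercyclic on `L⁰μ(T)`. -/
theorem stmt_18 {T : Type*} [MetricSpace T] (o : T)
    (hloc : ∀ M : ℝ, {v : T | dist o v ≤ M}.Finite)
    (hunb : ∀ M : ℝ, ∃ v : T, M < dist o v)
    (μ : T → ℝ) (hμ : ∀ v : T, 0 < μ v) (φ : T → T)
    (hφinj : Function.Injective φ)
    (hb : CompBoundedL0 o μ φ)
    (n : ℕ → ℕ) (hmono : StrictMono n) (hpos : ∀ k : ℕ, 0 < n k)
    (hfwd : ∀ v : T, Tendsto (fun k : ℕ => μ (φ^[n k] v)) atTop (nhds 0))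
    (hbwd : ∀ v : T, (∀ m : ℕ, ∃ u : T, φ^[m] u = v) →
      ∀ ε : ℝ, 0 < ε → ∃ K : ℕ, ∀ k : ℕ, K ≤ k → ∀ u : T, φ^[n k] u = v → μ u < ε) :
    ∃ f : T → ℂ, memL0 o μ f ∧
      ∀ g : T → ℂ, memL0 o μ g → ∀ ε : ℝ, 0 < ε →
        ∃ m : ℕ, wnorm μ (fun v => f (φ^[m] v) - g v) < ε := by
  classical
  haveI : Nonempty T := ⟨o⟩
  -- T is countable
  haveI hcT : Countable T := by
    have h1 : (Set.univ : Set T).Countable := by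
      have h2 : (Set.univ : Set T) ⊆ ⋃ M : ℕ, {v : T | dist o v ≤ M} := by
        intro v _
        exact Set.mem_iUnion.2 ⟨Nat.ceil (dist o v), by simpa using Nat.le_ceil (dist o v)⟩
      exact Set.Countable.mono h2 (Set.countable_iUnion fun M => (hloc M).countable)
    exact Set.countable_univ_iff.mp h1
  -- enumeration of finitely supported rational functions
  obtain ⟨D, hD⟩ : ∃ D : ℕ → (T →₀ ℚ × ℚ), Function.Surjective D := exists_surjective_nat _
  set gi : ℕ → T → ℂ := fun i v => q2c (D (Nat.unpair i).1 v) with hgi_def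
  set S : ℕ → Finset T := fun i => (D (Nat.unpair i).1).support with hS_def
  have hS0 : ∀ i (v : T), v ∉ S i → gi i v = 0 := by
    intro i v hv
    rw [hgi_def]
    simp only []
    rw [Finsupp.notMem_support_iff.1 hv, q2c_zero]
  have hgimem : ∀ i, memL0 o μ (gi i) := by
    intro i
    apply finsupp_memL0
    apply Set.Finite.subset (S i).finite_toSet
    intro v hv
    by_contra hns
    exact hv (hS0 i v hns)
  have henum : ∀ (e : T →₀ ℚ × ℚ) (B : ℕ),
      ∃ i, B ≤ i ∧ (∀ v, gi i v = q2c (e v)) ∧ S i = e.support := by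
    intro e B
    obtain ⟨a, ha⟩ := hD e
    refine ⟨Nat.pair a B, Nat.right_le_pair a B, ?_, ?_⟩
    · intro v; rw [hgi_def]; simp [Nat.unpair_pair, ha]
    · rw [hS_def]; simp [Nat.unpair_pair, ha]
  -- iterated boundedness
  obtain ⟨Cb, hCb1, hCit⟩ := comp_iterate o μ hμ φ hb
  have hCb0 : 0 < Cb := lt_of_lt_of_le one_pos hCb1
  -- recursive choice of times
  obtain ⟨k, hk⟩ := exists_rec (Qpred μ φ n gi S Cb)
    (fun i prev => Qpred_ex μ hμ φ n hmono hfwd hbwd gi S Cb hCb0 i prev)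
    (fun i prev prev' h κ => Qpred_compat μ φ n gi S Cb i prev prev' h κ)
  -- uniqueness of block representation
  have hU : ∀ i (v : T) i' (v' : T), v ∈ S i → v' ∈ S i' →
      φ^[n (k i)] v = φ^[n (k i')] v' → i = i' ∧ v = v' := by
    intro i v i' v' hv hv' heq
    rcases lt_trichotomy i i' with h | h | h
    · exact absurd heq.symm ((hk i').2.1 i h v' hv' v hv)
    · subst h
      exact ⟨rfl, hφinj.iterate (n (k i)) heq⟩
    · exact absurd heq ((hk i).2.1 i' h v hv v' hv')
  -- the hypercyclic vector f
  obtain ⟨f, hf⟩ : ∃ f : T → ℂ,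
      ∀ w : T, ((∃ p : ℕ × T, p.2 ∈ S p.1 ∧ φ^[n (k p.1)] p.2 = w) →
          ∃ i v, v ∈ S i ∧ φ^[n (k i)] v = w ∧ f w = gi i v) ∧
        ((¬ ∃ p : ℕ × T, p.2 ∈ S p.1 ∧ φ^[n (k p.1)] p.2 = w) → f w = 0) := by
    refine ⟨fun w => if h : ∃ p : ℕ × T, p.2 ∈ S p.1 ∧ φ^[n (k p.1)] p.2 = w then
      gi h.choose.1 h.choose.2 else 0, fun w => ⟨fun h => ?_, fun h => dif_neg h⟩⟩
    exact ⟨h.choose.1, h.choose.2, h.choose_spec.1, h.choose_spec.2, dif_pos h⟩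
  -- block functions
  have hbkex : ∀ i : ℕ, ∃ bfun : T → ℂ,
      (∀ w, μ w * ‖bfun w‖ ≤ (4:ℝ)⁻¹ ^ i / Cb ^ ((Finset.range i).sup fun j => n (k j))) ∧
      (∀ v ∈ S i, bfun (φ^[n (k i)] v) = gi i v) ∧ {w : T | bfun w ≠ 0}.Finite := by
    intro i
    refine ⟨fun w => if h : ∃ v, v ∈ S i ∧ φ^[n (k i)] v = w then gi i h.choose else 0,
      ?_, ?_, ?_⟩
    · intro w
      by_cases h : ∃ v, v ∈ S i ∧ φ^[n (k i)] v = w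
      · simp only [dif_pos h]
        have := (hk i).1 h.choose h.choose_spec.1
        rwa [h.choose_spec.2] at this
      · simp only [dif_neg h]
        simp
        positivity
    · intro v hv
      have h : ∃ v', v' ∈ S i ∧ φ^[n (k i)] v' = φ^[n (k i)] v := ⟨v, hv, rfl⟩
      simp only [dif_pos h]
      rw [hφinj.iterate (n (k i)) h.choose_spec.2]
    · apply Set.Finite.subset ((S i).finite_toSet.image (φ^[n (k i)]))
      intro w hw
      by_cases h : ∃ v, v ∈ S i ∧ φ^[n (k i)] v = w
      · exact ⟨h.choose, h.choose_spec.1, h.choose_spec.2⟩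
      · exact absurd (dif_neg h) hw
  choose hbk hbk1 hbk2 hbk3 using hbkex
  have hbkmem : ∀ i, memL0 o μ (hbk i) := fun i => finsupp_memL0 o μ _ (hbk3 i)
  have hbkw : ∀ i, wnorm μ (hbk i) ≤
      (4:ℝ)⁻¹ ^ i / Cb ^ ((Finset.range i).sup fun j => n (k j)) :=
    fun i => wnorm_le μ _ _ (hbk1 i)
  -- the key pointwise estimate
  have hkey : ∀ j (u : T), μ u * ‖f (φ^[n (k j)] u) - gi j u‖ ≤ (4:ℝ)⁻¹ ^ j := by
    intro j u
    have hmemj : ∀ (w : T), gi j w ≠ 0 → w ∈ S j := by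
      intro w hw; by_contra hns; exact hw (hS0 j w hns)
    by_cases hw : ∃ p : ℕ × T, p.2 ∈ S p.1 ∧ φ^[n (k p.1)] p.2 = φ^[n (k j)] u
    · obtain ⟨i, v, hv, hvw, hval⟩ := (hf _).1 hw
      rcases lt_trichotomy i j with h | h | h
      · have hu0 : gi j u = 0 := by
          by_contra h0
          have hij := (hU j u i v (hmemj u h0) hv hvw.symm).1
          omega
        rw [hval, hu0, sub_zero]
        exact (hk j).2.2 i h v hv u hvw.symm
      · subst h
        have hvu : v = u := hφinj.iterate (n (k i)) hvw
        rw [hval, hvu, sub_self, norm_zero, mul_zero]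
        positivity
      · have hu0 : gi j u = 0 := by
          by_contra h0
          have hij := (hU j u i v (hmemj u h0) hv hvw.symm).1
          omega
        rw [hval, hu0, sub_zero]
        have h1 : gi i v = hbk i (φ^[n (k j)] u) := by rw [← hvw, hbk2 i v hv]
        rw [h1]
        have h2 : μ u * ‖(hbk i ∘ φ^[n (k j)]) u‖ ≤ wnorm μ (hbk i ∘ φ^[n (k j)]) :=
          le_wnorm μ _ ((hCit (hbk i) (hbkmem i) (n (k j))).1).1 u
        have h3 : wnorm μ (hbk i ∘ φ^[n (k j)]) ≤ Cb ^ (n (k j)) * wnorm μ (hbk i) :=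
          (hCit (hbk i) (hbkmem i) (n (k j))).2
        have h4 : Cb ^ (n (k j)) * wnorm μ (hbk i) ≤ Cb ^ (n (k j)) *
            ((4:ℝ)⁻¹ ^ i / Cb ^ ((Finset.range i).sup fun j' => n (k j'))) :=
          mul_le_mul_of_nonneg_left (hbkw i) (by positivity)
        have hmle : n (k j) ≤ (Finset.range i).sup fun j' => n (k j') :=
          Finset.le_sup (f := fun j' => n (k j')) (Finset.mem_range.2 h)
        have hCle : Cb ^ (n (k j)) ≤ Cb ^ ((Finset.range i).sup fun j' => n (k j')) :=
          pow_le_pow_right₀ hCb1 hmle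
        have h5 : Cb ^ (n (k j)) *
            ((4:ℝ)⁻¹ ^ i / Cb ^ ((Finset.range i).sup fun j' => n (k j'))) ≤ (4:ℝ)⁻¹ ^ i := by
          have hpos : (0:ℝ) < Cb ^ ((Finset.range i).sup fun j' => n (k j')) := by positivity
          calc Cb ^ (n (k j)) *
              ((4:ℝ)⁻¹ ^ i / Cb ^ ((Finset.range i).sup fun j' => n (k j')))
              ≤ Cb ^ ((Finset.range i).sup fun j' => n (k j')) *
              ((4:ℝ)⁻¹ ^ i / Cb ^ ((Finset.range i).sup fun j' => n (k j'))) := by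
                apply mul_le_mul_of_nonneg_right hCle
                positivity
            _ = (4:ℝ)⁻¹ ^ i := by field_simp
        have h6 : (4:ℝ)⁻¹ ^ i ≤ (4:ℝ)⁻¹ ^ j :=
          pow_le_pow_of_le_one (by norm_num) (by norm_num) h.le
        have h2' : μ u * ‖hbk i (φ^[n (k j)] u)‖ = μ u * ‖(hbk i ∘ φ^[n (k j)]) u‖ := rfl
        rw [h2']
        linarith
    · have hf0 : f (φ^[n (k j)] u) = 0 := (hf _).2 hw
      have hu0 : gi j u = 0 := by
        by_contra h0
        exact hw ⟨(j, u), hmemj u h0, rfl⟩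
      rw [hf0, hu0, sub_zero, norm_zero, mul_zero]
      positivity
  -- f is in L⁰μ(T)
  have hfb : ∀ w : T, μ w * ‖f w‖ ≤ 1 := by
    intro w
    by_cases hw : ∃ p : ℕ × T, p.2 ∈ S p.1 ∧ φ^[n (k p.1)] p.2 = w
    · obtain ⟨i, v, hv, hvw, hval⟩ := (hf w).1 hw
      rw [hval, ← hvw]
      calc μ (φ^[n (k i)] v) * ‖gi i v‖
          ≤ (4:ℝ)⁻¹ ^ i / Cb ^ ((Finset.range i).sup fun j => n (k j)) := (hk i).1 v hv
        _ ≤ (4:ℝ)⁻¹ ^ i := div_le_self (by positivity) (one_le_pow₀ hCb1)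
        _ ≤ 1 := pow_le_one₀ (by norm_num) (by norm_num)
    · rw [(hf w).2 hw]; simp
  have hfmem : memL0 o μ f := by
    constructor
    · refine ⟨1, ?_⟩
      rintro x ⟨w, rfl⟩
      exact hfb w
    · intro ε hε
      obtain ⟨I, hI⟩ := eventually_atTop.1
        ((tendsto_pow_atTop_nhds_zero_of_lt_one (by norm_num : (0:ℝ) ≤ 4⁻¹)
          (by norm_num)).eventually_lt_const hε)
      set F : Finset T := (Finset.range I).biUnion (fun i => (S i).image (φ^[n (k i)]))
        with hF_def
      obtain ⟨N₀, hN₀⟩ := ((F : Set T).toFinite.image (dist o)).bddAbove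
      refine ⟨N₀ + 1, fun w hwN => ?_⟩
      have hwF : w ∉ F := by
        intro hwf
        have := hN₀ ⟨w, hwf, rfl⟩
        linarith
      by_cases hw : ∃ p : ℕ × T, p.2 ∈ S p.1 ∧ φ^[n (k p.1)] p.2 = w
      · obtain ⟨i, v, hv, hvw, hval⟩ := (hf w).1 hw
        have hiI : I ≤ i := by
          by_contra hlt
          push_neg at hlt
          exact hwF (Finset.mem_biUnion.2 ⟨i, Finset.mem_range.2 hlt,
            Finset.mem_image.2 ⟨v, hv, hvw⟩⟩)
        rw [hval, ← hvw]
        calc μ (φ^[n (k i)] v) * ‖gi i v‖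
            ≤ (4:ℝ)⁻¹ ^ i / Cb ^ ((Finset.range i).sup fun j => n (k j)) := (hk i).1 v hv
          _ ≤ (4:ℝ)⁻¹ ^ i := div_le_self (by positivity) (one_le_pow₀ hCb1)
          _ < ε := hI i hiI
      · rw [(hf w).2 hw]
        simpa using hε
  refine ⟨f, hfmem, ?_⟩
  -- the approximation property
  intro g hg ε hε
  obtain ⟨N, hN⟩ := hg.2 (ε/4) (by positivity)
  have hch : ∀ v : T, ∃ q : ℚ × ℚ, ‖g v - q2c q‖ < ε / (4 * μ v) := by
    intro v
    have := hμ v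
    exact q2c_dense _ _ (by positivity)
  set e : T →₀ ℚ × ℚ := Finsupp.onFinset (hloc N).toFinset
    (fun v => if v ∈ (hloc N).toFinset then (hch v).choose else 0)
    (fun v hv => by
      by_contra hvn
      exact hv (by simp only [if_neg hvn])) with he_def
  have he : ∀ v : T, μ v * ‖g v - q2c (e v)‖ < ε/4 := by
    intro v
    by_cases hvF : v ∈ (hloc N).toFinset
    · have hev : e v = (hch v).choose := by
        rw [he_def, Finsupp.onFinset_apply, if_pos hvF]
      rw [hev]
      have hq := (hch v).choose_spec
      have h1 : μ v * ‖g v - q2c (hch v).choose‖ < μ v * (ε / (4 * μ v)) :=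
        mul_lt_mul_of_pos_left hq (hμ v)
      have h2 : μ v * (ε / (4 * μ v)) = ε/4 := by
        have hμv : (μ v) ≠ 0 := (hμ v).ne'
        field_simp
      linarith
    · have hev : e v = 0 := by
        rw [he_def, Finsupp.onFinset_apply, if_neg hvF]
      rw [hev, q2c_zero, sub_zero]
      apply hN
      have : ¬ dist o v ≤ N := by
        intro hc
        exact hvF ((hloc N).mem_toFinset.2 hc)
      linarith [not_le.1 this]
  obtain ⟨I, hI⟩ := eventually_atTop.1
    ((tendsto_pow_atTop_nhds_zero_of_lt_one (by norm_num : (0:ℝ) ≤ 4⁻¹)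
      (by norm_num)).eventually_lt_const (show (0:ℝ) < ε/2 by positivity))
  obtain ⟨j, hjI, hgj, _⟩ := henum e I
  refine ⟨n (k j), lt_of_le_of_lt (wnorm_le μ _ ((4:ℝ)⁻¹ ^ j + ε/4) fun u => ?_) ?_⟩
  · have t1 : ‖f (φ^[n (k j)] u) - g u‖ ≤
        ‖f (φ^[n (k j)] u) - gi j u‖ + ‖gi j u - g u‖ :=
      norm_sub_le_norm_sub_add_norm_sub _ _ _
    have t2 : μ u * ‖gi j u - g u‖ ≤ ε/4 := by
      rw [hgj u, norm_sub_rev]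
      exact (he u).le
    calc μ u * ‖f (φ^[n (k j)] u) - g u‖
        ≤ μ u * (‖f (φ^[n (k j)] u) - gi j u‖ + ‖gi j u - g u‖) :=
          mul_le_mul_of_nonneg_left t1 (hμ u).le
      _ = μ u * ‖f (φ^[n (k j)] u) - gi j u‖ + μ u * ‖gi j u - g u‖ := mul_add _ _ _
      _ ≤ (4:ℝ)⁻¹ ^ j + ε/4 := add_le_add (hkey j u) t2
  · have := hI j hjI
    linarith
end

section
/- Let φ be an injective self-map of T such that C_φ is a bounded operator on L⁰μ(T). If C_φ is hypercyclic on L⁰μ(T), then there exists a strictly increasing sequence {n_k} of positive integers such that μ(φ^{n_k}(v)) → 0 as k → ∞ for every v ∈ T, and μ(φ^{-n_k}(v)) → 0 as k → ∞ for every v ∈ T^∞, where for v ∈ T^∞ and n ∈ ℕ, φ^{-n}(v) denotes the unique u ∈ T with φⁿ(u) = v. -/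
open Filter Set Topology

set_option linter.unusedSectionVars false

section Aux

variable {T : Type*} [MetricSpace T]

lemma wnorm_pt {μ : T → ℝ} {h : T → ℂ} (hb : memL μ h) (v : T) :
    μ v * ‖h v‖ ≤ wnorm μ h :=
  le_ciSup hb v

/-- The probe function: `c/μ` on `S`, `0` elsewhere. -/
noncomputable def gfun (μ : T → ℝ) (S : Set T) (c : ℝ) : T → ℂ :=
  S.indicator (fun v => ((c / μ v : ℝ) : ℂ))

lemma gfun_wval_mem (μ : T → ℝ) (hμ : ∀ v, 0 < μ v) {S : Set T} {c : ℝ} (hc : 0 ≤ c)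
    {v : T} (h : v ∈ S) : μ v * ‖gfun μ S c v‖ = c := by
  simp only [gfun, Set.indicator_of_mem h, Complex.norm_real, Real.norm_eq_abs]
  rw [abs_of_nonneg (div_nonneg hc (hμ v).le), mul_div_assoc', mul_comm,
    mul_div_assoc, div_self (hμ v).ne', mul_one]

lemma gfun_wval_notMem (μ : T → ℝ) {S : Set T} {c : ℝ}
    {v : T} (h : v ∉ S) : μ v * ‖gfun μ S c v‖ = 0 := by
  simp [gfun, Set.indicator_of_notMem h]

lemma gfun_memL0 (o : T) (μ : T → ℝ) (hμ : ∀ v, 0 < μ v) {S : Set T} (hS : S.Finite)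
    {c : ℝ} (hc : 0 ≤ c) : memL0 o μ (gfun μ S c) := by
  constructor
  · refine ⟨c, ?_⟩
    rintro x ⟨v, rfl⟩
    simp only
    by_cases h : v ∈ S
    · rw [gfun_wval_mem μ hμ hc h]
    · rw [gfun_wval_notMem μ h]; exact hc
  · intro ε hε
    obtain ⟨b, hb⟩ : BddAbove ((fun v => dist o v) '' S) := (hS.image _).bddAbove
    refine ⟨b + 1, fun v hv => ?_⟩
    have hvS : v ∉ S := by
      intro hmem
      have := hb ⟨v, hmem, rfl⟩
      simp only at this
      linarith
    rw [gfun_wval_notMem μ hvS]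
    exact hε

end Aux

section Aux2

variable {T : Type*} [MetricSpace T]

lemma probe_lower {μv ε c : ℝ} {a b : ℂ} (hμv : 0 ≤ μv)
    (h1 : μv * ‖a - b‖ < ε) (h2 : μv * ‖b‖ = c) : c - ε < μv * ‖a‖ := by
  have h3 : ‖b‖ ≤ ‖a‖ + ‖a - b‖ := by
    calc ‖b‖ = ‖a - (a - b)‖ := by congr 1; ring
    _ ≤ ‖a‖ + ‖a - b‖ := norm_sub_le _ _
  nlinarith [mul_le_mul_of_nonneg_left h3 hμv]

lemma memL_sub (μ : T → ℝ) (hμ : ∀ v, 0 ≤ μ v) {h g : T → ℂ}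
    (hh : memL μ h) (hg : memL μ g) : memL μ (fun v => h v - g v) := by
  obtain ⟨b1, hb1⟩ := hh
  obtain ⟨b2, hb2⟩ := hg
  refine ⟨b1 + b2, ?_⟩
  rintro x ⟨v, rfl⟩
  have h1 : μ v * ‖h v‖ ≤ b1 := hb1 ⟨v, rfl⟩
  have h2 : μ v * ‖g v‖ ≤ b2 := hb2 ⟨v, rfl⟩
  have h3 : ‖h v - g v‖ ≤ ‖h v‖ + ‖g v‖ := norm_sub_le _ _
  show μ v * ‖h v - g v‖ ≤ b1 + b2
  nlinarith [mul_le_mul_of_nonneg_left h3 (hμ v)]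

lemma iter_memL0 (o : T) (μ : T → ℝ) (φ : T → T)
    (hb1 : ∀ f : T → ℂ, memL0 o μ f → memL0 o μ (f ∘ φ))
    (f : T → ℂ) (hf : memL0 o μ f) (m : ℕ) : memL0 o μ (fun v => f (φ^[m] v)) := by
  induction m with
  | zero => simpa using hf
  | succ m ih =>
      have heq : (fun v => f (φ^[m+1] v)) = (fun v => f (φ^[m] v)) ∘ φ := by
        funext v
        simp [Function.iterate_succ_apply]
      rw [heq]
      exact hb1 _ ih

lemma unif_little (o : T) (μ : T → ℝ) (φ : T → T)
    (hb1 : ∀ f : T → ℂ, memL0 o μ f → memL0 o μ (f ∘ φ))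
    (f : T → ℂ) (hf : memL0 o μ f) (J : ℕ) :
    ∃ N : ℝ, ∀ j ≤ J, ∀ v : T, N ≤ dist o v → μ v * ‖f (φ^[j] v)‖ < 1 := by
  have h : ∀ j : ℕ, ∃ N, ∀ v : T, N ≤ dist o v → μ v * ‖f (φ^[j] v)‖ < 1 :=
    fun j => (iter_memL0 o μ φ hb1 f hf j).2 1 one_pos
  choose Nf hNf using h
  refine ⟨(Finset.range (J+1)).sup' (Finset.nonempty_range_iff.2 (Nat.succ_ne_zero J)) Nf,
    fun j hj v hv => ?_⟩
  exact hNf j v (le_trans (Finset.le_sup' Nf (Finset.mem_range.2 (Nat.lt_succ_of_le hj))) hv)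

lemma mu_preimage (o : T) (μ : T → ℝ) (hμ : ∀ v, 0 < μ v) (φ : T → T)
    (hb : CompBoundedL0 o μ φ) :
    ∃ C : ℝ, 1 ≤ C ∧ ∀ (m : ℕ) (w u : T), φ^[m] w = u → μ w ≤ C^m * μ u := by
  obtain ⟨hb1, C, hC⟩ := hb
  refine ⟨max C 1, le_max_right _ _, ?_⟩
  set C₀ := max C 1 with hC₀def
  have hC₀1 : (1:ℝ) ≤ C₀ := le_max_right _ _
  have key : ∀ x w : T, φ w = x → μ w ≤ C₀ * μ x := by
    intro x w hwx
    set e : T → ℂ := gfun μ {x} (μ x) with he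
    have hex : memL0 o μ e := gfun_memL0 o μ hμ (Set.finite_singleton x) (hμ x).le
    have hval : μ x * ‖e x‖ = μ x := gfun_wval_mem μ hμ (hμ x).le rfl
    haveI : Nonempty T := ⟨x⟩
    have henorm : wnorm μ e ≤ μ x := by
      apply ciSup_le
      intro v
      by_cases hvx : v = x
      · subst hvx
        rw [hval]
      · rw [gfun_wval_notMem μ (by simpa using hvx)]
        exact (hμ x).le
    have he0 : 0 ≤ wnorm μ e := le_trans (mul_nonneg (hμ x).le (norm_nonneg _)) (wnorm_pt hex.1 x)
    have hcomp : wnorm μ (e ∘ φ) ≤ C * wnorm μ e := hC e hex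
    have hCw : C * wnorm μ e ≤ C₀ * μ x := by
      rcases le_or_gt 0 C with h | h
      · exact mul_le_mul (le_max_left _ _) henorm he0 (le_trans zero_le_one hC₀1)
      · calc C * wnorm μ e ≤ 0 := mul_nonpos_of_nonpos_of_nonneg h.le he0
          _ ≤ C₀ * μ x := mul_nonneg (le_trans zero_le_one hC₀1) (hμ x).le
    have hne : ‖e x‖ = 1 := mul_left_cancel₀ (hμ x).ne' (hval.trans (mul_one (μ x)).symm)
    have hpt : μ w * ‖(e ∘ φ) w‖ ≤ wnorm μ (e ∘ φ) := wnorm_pt (hb1 e hex).1 w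
    have h4 : μ w * ‖(e ∘ φ) w‖ ≤ C₀ * μ x := le_trans hpt (le_trans hcomp hCw)
    have h5 : (e ∘ φ) w = e x := by rw [Function.comp_apply, hwx]
    rw [h5, hne, mul_one] at h4
    exact h4
  intro m
  induction m with
  | zero =>
      intro w u hwu
      simp only [Function.iterate_zero, id_eq] at hwu
      rw [hwu, pow_zero, one_mul]
  | succ m ih =>
      intro w u hwu
      rw [Function.iterate_succ_apply] at hwu
      have h1 : μ (φ w) ≤ C₀^m * μ u := ih (φ w) u hwu
      have h2 : μ w ≤ C₀ * μ (φ w) := key (φ w) w rfl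
      calc μ w ≤ C₀ * μ (φ w) := h2
        _ ≤ C₀ * (C₀^m * μ u) := mul_le_mul_of_nonneg_left h1 (le_trans zero_le_one hC₀1)
        _ = C₀^(m+1) * μ u := by ring

end Aux2

set_option maxHeartbeats 1000000 in
lemma stage {T : Type*} [MetricSpace T] (o : T)
    (hloc : ∀ M : ℝ, {v : T | dist o v ≤ M}.Finite)
    (hunb : ∀ M : ℝ, ∃ v : T, M < dist o v)
    (μ : T → ℝ) (hμ : ∀ v : T, 0 < μ v) (φ : T → T)
    (hb : CompBoundedL0 o μ φ)
    (f : T → ℂ) (hf : memL0 o μ f)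
    (hdense : ∀ g : T → ℂ, memL0 o μ g → ∀ ε : ℝ, 0 < ε →
      ∃ m : ℕ, wnorm μ (fun v => f (φ^[m] v) - g v) < ε)
    (k prev : ℕ) :
    ∃ n : ℕ, prev < n ∧
      (∀ v : T, dist o v ≤ (k:ℝ) → μ (φ^[n] v) < 1/((k:ℝ)+1)) ∧
      (∀ v : T, dist o v ≤ (k:ℝ) → ∀ u : T, φ^[n] u = v → μ u < 1/((k:ℝ)+1)) := by
  obtain ⟨C₀, hC₀1, hpre⟩ := mu_preimage o μ hμ φ hb
  have hb1 := hb.1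
  obtain ⟨ek, hekdef⟩ : ∃ x : ℝ, x = 1/((k:ℝ)+1) := ⟨_, rfl⟩
  rw [← hekdef]
  have hek : 0 < ek := by rw [hekdef]; positivity
  set F : Set T := {v : T | dist o v ≤ (k:ℝ)} with hFdef
  have hF : F.Finite := hloc k
  have hoF : o ∈ F := by simp [hFdef]
  -- norm bound on f
  obtain ⟨B, hBdef⟩ : ∃ x : ℝ, x = wnorm μ f := ⟨_, rfl⟩
  have hBpt : ∀ v, μ v * ‖f v‖ ≤ B := fun v => hBdef ▸ wnorm_pt hf.1 v
  have hB0 : 0 ≤ B := le_trans (mul_nonneg (hμ o).le (norm_nonneg _)) (hBpt o)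
  -- Step A
  have hg1 : memL0 o μ (gfun μ F 2) := gfun_memL0 o μ hμ hF (by norm_num)
  obtain ⟨m₁, hm₁⟩ := hdense _ hg1 (1/2) (by norm_num)
  have hd1mem : memL μ (fun v => f (φ^[m₁] v) - gfun μ F 2 v) :=
    memL_sub μ (fun v => (hμ v).le) (iter_memL0 o μ φ hb1 f hf m₁).1 hg1.1
  have hA : ∀ v ∈ F, 1 ≤ μ v * ‖f (φ^[m₁] v)‖ := by
    intro v hv
    have h1 : μ v * ‖f (φ^[m₁] v) - gfun μ F 2 v‖ < 1/2 :=
      lt_of_le_of_lt (wnorm_pt hd1mem v) hm₁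
    have h2 : μ v * ‖gfun μ F 2 v‖ = 2 := gfun_wval_mem μ hμ (by norm_num) hv
    have := probe_lower (hμ v).le h1 h2
    linarith
  -- far point w₀
  obtain ⟨Nu, hNu⟩ := unif_little o μ φ hb1 f hf (m₁ + prev)
  obtain ⟨w₀, hw₀⟩ := hunb Nu
  -- the set G
  set G : Set T := (F ∪ (φ^[m₁]) '' F) ∪ {w₀} with hGdef
  have hG : G.Finite := (hF.union (hF.image _)).union (Set.finite_singleton w₀)
  have hw₀G : w₀ ∈ G := Or.inr rfl
  -- bounds on μ over F and G
  obtain ⟨vM, hvM, hvMmax⟩ := Set.exists_max_image F μ hF ⟨o, hoF⟩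
  obtain ⟨Mμ, hMμdef⟩ : ∃ x : ℝ, x = μ vM := ⟨_, rfl⟩
  have hMμ0 : 0 < Mμ := hMμdef ▸ hμ vM
  have hMμ : ∀ v ∈ F, μ v ≤ Mμ := fun v hv => hMμdef ▸ hvMmax v hv
  obtain ⟨uM, huM, huMmax⟩ := Set.exists_max_image G μ hG ⟨w₀, hw₀G⟩
  obtain ⟨um, hum, hummin⟩ := Set.exists_min_image G μ hG ⟨w₀, hw₀G⟩
  obtain ⟨MG, hMGdef⟩ : ∃ x : ℝ, x = μ uM := ⟨_, rfl⟩
  obtain ⟨mG, hmGdef⟩ : ∃ x : ℝ, x = μ um := ⟨_, rfl⟩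
  have hmG0 : 0 < mG := hmGdef ▸ hμ um
  have hMG0 : 0 < MG := hMGdef ▸ hμ uM
  have huMmax' : ∀ b ∈ G, μ b ≤ MG := fun b hb' => hMGdef ▸ huMmax b hb'
  have hummin' : ∀ b ∈ G, mG ≤ μ b := fun b hb' => hmGdef ▸ hummin b hb'
  obtain ⟨Q, hQdef⟩ : ∃ x : ℝ, x = MG * B / mG := ⟨_, rfl⟩
  have hB0' := hB0
  have hQ0 : 0 ≤ Q := by rw [hQdef]; positivity
  have hQ : ∀ u ∈ G, ∀ v' ∈ G, μ u * ‖f v'‖ ≤ Q := by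
    intro u hu v' hv'
    rw [hQdef, le_div_iff₀ hmG0]
    have e1 : μ u ≤ MG := huMmax' u hu
    have e2 : mG ≤ μ v' := hummin' v' hv'
    have e3 : μ v' * ‖f v'‖ ≤ B := hBpt v'
    calc μ u * ‖f v'‖ * mG ≤ MG * ‖f v'‖ * mG :=
          mul_le_mul_of_nonneg_right (mul_le_mul_of_nonneg_right e1 (norm_nonneg _)) hmG0.le
      _ = MG * (‖f v'‖ * mG) := by ring
      _ ≤ MG * (‖f v'‖ * μ v') :=
          mul_le_mul_of_nonneg_left (mul_le_mul_of_nonneg_left e2 (norm_nonneg _)) hMG0.le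
      _ = MG * (μ v' * ‖f v'‖) := by ring
      _ ≤ MG * B := mul_le_mul_of_nonneg_left e3 hMG0.le
  -- constants for step B
  have hC₀p : (0:ℝ) < C₀^m₁ := pow_pos (lt_of_lt_of_le one_pos hC₀1) m₁
  obtain ⟨X, hXdef⟩ : ∃ x : ℝ, x = C₀^m₁ * (B * Mμ) := ⟨_, rfl⟩
  have hX0 : 0 ≤ X := by rw [hXdef]; positivity
  obtain ⟨c₂, hc₂def⟩ : ∃ x : ℝ, x = X / ek + Q + 4 := ⟨_, rfl⟩
  have hXek : 0 ≤ X / ek := div_nonneg hX0 hek.le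
  have hc₂4 : 4 ≤ c₂ := by rw [hc₂def]; linarith
  have hc₂0 : 0 ≤ c₂ := by linarith
  obtain ⟨ε₂, hε₂def⟩ : ∃ x : ℝ, x = min (ek / Mμ) 1 := ⟨_, rfl⟩
  have hε₂0 : 0 < ε₂ := hε₂def ▸ lt_min (div_pos hek hMμ0) one_pos
  have hε₂1 : ε₂ ≤ 1 := hε₂def ▸ min_le_right _ _
  have hε₂Mμ : ε₂ * Mμ ≤ ek := by
    rw [hε₂def]
    calc min (ek / Mμ) 1 * Mμ ≤ (ek / Mμ) * Mμ :=
          mul_le_mul_of_nonneg_right (min_le_left _ _) hMμ0.le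
      _ = ek := by field_simp
  -- Step B
  have hg2 : memL0 o μ (gfun μ G c₂) := gfun_memL0 o μ hμ hG hc₂0
  obtain ⟨m₂, hm₂⟩ := hdense _ hg2 ε₂ hε₂0
  have hd2mem : memL μ (fun v => f (φ^[m₂] v) - gfun μ G c₂ v) :=
    memL_sub μ (fun v => (hμ v).le) (iter_memL0 o μ φ hb1 f hf m₂).1 hg2.1
  have hpt2 : ∀ w, μ w * ‖f (φ^[m₂] w) - gfun μ G c₂ w‖ < ε₂ :=
    fun w => lt_of_le_of_lt (wnorm_pt hd2mem w) hm₂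
  have hlow : ∀ w ∈ G, c₂ - ε₂ < μ w * ‖f (φ^[m₂] w)‖ :=
    fun w hw => probe_lower (hμ w).le (hpt2 w) (gfun_wval_mem μ hμ hc₂0 hw)
  -- m₂ is large
  have hm₂big : m₁ + prev < m₂ := by
    by_contra hcon
    push_neg at hcon
    have h1 : μ w₀ * ‖f (φ^[m₂] w₀)‖ < 1 := hNu m₂ hcon w₀ hw₀.le
    have h2 := hlow w₀ hw₀G
    linarith
  refine ⟨m₂ - m₁, by omega, ?_, ?_⟩
  · -- forward estimate
    intro v hv
    have hvF : v ∈ F := hv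
    have hvG : v ∈ G := Or.inl (Or.inl hvF)
    set z : T := φ^[m₂ - m₁] v with hzdef
    have hz : φ^[m₁] z = φ^[m₂] v := by
      rw [hzdef, ← Function.iterate_add_apply]
      congr 1
      omega
    have h5 : μ z ≤ C₀^m₁ * μ (φ^[m₂] v) := hpre m₁ z _ hz
    have h6 : μ (φ^[m₂] v) * ‖f (φ^[m₂] v)‖ ≤ B := hBpt _
    have hlowv := hlow v hvG
    -- chain
    have s1 : μ z * (c₂ - ε₂) ≤ μ z * (μ v * ‖f (φ^[m₂] v)‖) :=
      mul_le_mul_of_nonneg_left hlowv.le (hμ z).le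
    have s2 : μ z * ‖f (φ^[m₂] v)‖ ≤ C₀^m₁ * (μ (φ^[m₂] v) * ‖f (φ^[m₂] v)‖) := by
      have := mul_le_mul_of_nonneg_right h5 (norm_nonneg (f (φ^[m₂] v)))
      linarith [this]
    have s3 : μ z * (c₂ - ε₂) ≤ μ v * (C₀^m₁ * B) := by
      have s2' : μ z * ‖f (φ^[m₂] v)‖ ≤ C₀^m₁ * B := by
        calc μ z * ‖f (φ^[m₂] v)‖ ≤ C₀^m₁ * (μ (φ^[m₂] v) * ‖f (φ^[m₂] v)‖) := s2
          _ ≤ C₀^m₁ * B := mul_le_mul_of_nonneg_left h6 hC₀p.le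
      calc μ z * (c₂ - ε₂) ≤ μ z * (μ v * ‖f (φ^[m₂] v)‖) := s1
        _ = μ v * (μ z * ‖f (φ^[m₂] v)‖) := by ring
        _ ≤ μ v * (C₀^m₁ * B) := mul_le_mul_of_nonneg_left s2' (hμ v).le
    have s4 : μ z * (c₂ - ε₂) ≤ X := by
      have h9 : μ v * (C₀^m₁ * B) ≤ X := by
        rw [hXdef]
        nlinarith [mul_le_mul_of_nonneg_left (hMμ v hvF) (mul_nonneg hC₀p.le hB0)]
      linarith [s3]
    have s5 : X < ek * (c₂ - ε₂) := by
      have he : ek * (X / ek) = X := by field_simp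
      have h8 : ek * (c₂ - 1) = X + ek * (Q + 3) := by
        calc ek * (c₂ - 1) = ek * (X / ek) + ek * (Q + 3) := by rw [hc₂def]; ring
          _ = X + ek * (Q + 3) := by rw [he]
      have h7 : ek * (c₂ - 1) ≤ ek * (c₂ - ε₂) := by nlinarith
      nlinarith [mul_pos hek (show (0:ℝ) < Q + 3 by linarith)]
    have hce : 0 < c₂ - ε₂ := by linarith
    have h10 : μ z * (c₂ - ε₂) < ek * (c₂ - ε₂) := lt_of_le_of_lt s4 s5
    exact lt_of_mul_lt_mul_right (by linarith) hce.le
  · -- backward estimate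
    intro v hv u hu
    have hvF : v ∈ F := hv
    have hv'G : φ^[m₁] v ∈ G := Or.inl (Or.inr ⟨v, hvF, rfl⟩)
    have hu2 : φ^[m₂] u = φ^[m₁] v := by
      have : φ^[m₁ + (m₂ - m₁)] u = φ^[m₁] v := by
        rw [Function.iterate_add_apply, hu]
      rw [← this]
      congr 1
      omega
    by_cases hug : u ∈ G
    · exfalso
      have h1 := hlow u hug
      rw [hu2] at h1
      have h2 : μ u * ‖f (φ^[m₁] v)‖ ≤ Q := hQ u hug _ hv'G
      linarith
    · have h0 := hpt2 u
      rw [hu2, gfun, Set.indicator_of_notMem hug, sub_zero] at h0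
      have h1 : 1 ≤ μ v * ‖f (φ^[m₁] v)‖ := hA v hvF
      -- μ u ≤ μ u * (μ v * ‖f v'‖) = μ v * (μ u * ‖f v'‖) < μ v * ε₂ ≤ Mμ * ε₂ ≤ ek
      have s1 : μ u ≤ μ v * (μ u * ‖f (φ^[m₁] v)‖) := by
        nlinarith [(hμ u).le, (hμ v).le, norm_nonneg (f (φ^[m₁] v))]
      have s2 : μ v * (μ u * ‖f (φ^[m₁] v)‖) < μ v * ε₂ :=
        mul_lt_mul_of_pos_left h0 (hμ v)
      have s3 : μ v * ε₂ ≤ Mμ * ε₂ := mul_le_mul_of_nonneg_right (hMμ v hvF) hε₂0.le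
      calc μ u ≤ μ v * (μ u * ‖f (φ^[m₁] v)‖) := s1
        _ < μ v * ε₂ := s2
        _ ≤ Mμ * ε₂ := s3
        _ ≤ ek := by rw [mul_comm]; exact hε₂Mμ

/-- Let `φ` be injective with `C_φ` bounded on `L⁰μ(T)`. If `C_φ` is
hypercyclic on `L⁰μ(T)`, then there exists a strictly increasing sequence `{n_k}` of
positive integers with `μ(φ^{n_k}(v)) → 0` for every `v ∈ T`, and `μ(φ^{-n_k}(v)) → 0`
for every `v ∈ T^∞` (where `φ^{-n}(v)` is the unique `u` with `φⁿ(u) = v`). -/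
theorem stmt_19 {T : Type*} [MetricSpace T] (o : T)
    (hloc : ∀ M : ℝ, {v : T | dist o v ≤ M}.Finite)
    (hunb : ∀ M : ℝ, ∃ v : T, M < dist o v)
    (μ : T → ℝ) (hμ : ∀ v : T, 0 < μ v) (φ : T → T)
    (hφinj : Function.Injective φ)
    (hb : CompBoundedL0 o μ φ)
    (hhyp : ∃ f : T → ℂ, memL0 o μ f ∧
      ∀ g : T → ℂ, memL0 o μ g → ∀ ε : ℝ, 0 < ε →
        ∃ m : ℕ, wnorm μ (fun v => f (φ^[m] v) - g v) < ε) :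
    ∃ n : ℕ → ℕ, StrictMono n ∧ (∀ k : ℕ, 0 < n k) ∧
      (∀ v : T, Tendsto (fun k : ℕ => μ (φ^[n k] v)) atTop (nhds 0)) ∧
      (∀ v : T, (∀ m : ℕ, ∃ u : T, φ^[m] u = v) →
        ∀ ε : ℝ, 0 < ε → ∃ K : ℕ, ∀ k : ℕ, K ≤ k → ∀ u : T, φ^[n k] u = v → μ u < ε) := by
  obtain ⟨f, hf, hdense⟩ := hhyp
  have key : ∀ k prev : ℕ, ∃ n : ℕ, prev < n ∧
      (∀ v : T, dist o v ≤ (k:ℝ) → μ (φ^[n] v) < 1/((k:ℝ)+1)) ∧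
      (∀ v : T, dist o v ≤ (k:ℝ) → ∀ u : T, φ^[n] u = v → μ u < 1/((k:ℝ)+1)) :=
    fun k prev => stage o hloc hunb μ hμ φ hb f hf hdense k prev
  choose Fc h1 h2 h3 using key
  let n : ℕ → ℕ := fun k => Nat.rec (Fc 0 0) (fun k ih => Fc (k+1) ih) k
  have hn0 : n 0 = Fc 0 0 := rfl
  have hnsucc : ∀ k, n (k+1) = Fc (k+1) (n k) := fun k => rfl
  have hlt : ∀ k, n k < n (k+1) := fun k => by rw [hnsucc k]; exact h1 (k+1) (n k)
  have hmono : StrictMono n := strictMono_nat_of_lt_succ hlt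
  have hpos : ∀ k, 0 < n k := by
    intro k
    have h0 : 0 < n 0 := by rw [hn0]; exact h1 0 0
    exact lt_of_lt_of_le h0 (hmono.monotone (Nat.zero_le k))
  have hPf : ∀ (k : ℕ) (v : T), dist o v ≤ (k:ℝ) → μ (φ^[n k] v) < 1/((k:ℝ)+1) := by
    intro k
    cases k with
    | zero => rw [hn0]; exact h2 0 0
    | succ k => rw [hnsucc k]; exact h2 (k+1) (n k)
  have hPb : ∀ (k : ℕ) (v : T), dist o v ≤ (k:ℝ) → ∀ u : T, φ^[n k] u = v →
      μ u < 1/((k:ℝ)+1) := by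
    intro k
    cases k with
    | zero => rw [hn0]; exact h3 0 0
    | succ k => rw [hnsucc k]; exact h3 (k+1) (n k)
  have hbnd : ∀ (ε : ℝ), 0 < ε → ∀ (x : ℝ), ∃ K : ℕ, ∀ k : ℕ, K ≤ k →
      x ≤ (k:ℝ) ∧ 1/((k:ℝ)+1) < ε := by
    intro ε hε x
    obtain ⟨K₁, hK₁⟩ := exists_nat_ge x
    obtain ⟨K₂, hK₂⟩ := exists_nat_gt (1/ε)
    refine ⟨max K₁ K₂, fun k hk => ?_⟩
    have hk1 : (K₁:ℝ) ≤ (k:ℝ) := Nat.cast_le.2 (le_trans (le_max_left _ _) hk)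
    have hk2 : (K₂:ℝ) ≤ (k:ℝ) := Nat.cast_le.2 (le_trans (le_max_right _ _) hk)
    refine ⟨le_trans hK₁ hk1, ?_⟩
    rw [div_lt_iff₀ (by positivity)]
    have := (div_lt_iff₀ hε).1 hK₂
    nlinarith
  refine ⟨n, hmono, hpos, ?_, ?_⟩
  · intro v
    rw [Metric.tendsto_atTop]
    intro ε hε
    obtain ⟨K, hK⟩ := hbnd ε hε (dist o v)
    refine ⟨K, fun k hk => ?_⟩
    obtain ⟨hd, hb'⟩ := hK k hk
    have hsmall : μ (φ^[n k] v) < 1/((k:ℝ)+1) := hPf k v hd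
    have heq : dist (μ (φ^[n k] v)) 0 = μ (φ^[n k] v) := by
      rw [Real.dist_eq, sub_zero, abs_of_pos (hμ _)]
    rw [heq]
    linarith
  · intro v _ ε hε
    obtain ⟨K, hK⟩ := hbnd ε hε (dist o v)
    refine ⟨K, fun k hk u hu => ?_⟩
    obtain ⟨hd, hb'⟩ := hK k hk
    have := hPb k v hd u hu
    linarith
end
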